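/- arXiv:1311.7642 — 6 statements merged into one kernel-verified Lean document; each statement's English description precedes it below -/
import Mathlib

section
/- Let A, B be small categories with finite products, and let f : A ⥤ [Bᵒᵖ, Type] be a functor preserving finite products (where the presheaf category has pointwise products). Then the left Kan extension f^♯ : [Aᵒᵖ, Type] ⥤ [Bᵒᵖ, Type] of f along the Yoneda embedding of A also preserves finite products. -/
/-!
The left Kan extension `L` of `f` along `y = yoneda` preserves colimits and satisfies `L ∘ y ≅ f`.
Both `L (X ⊗ -)` and `L X ⊗ L (-)` then preserve colimits, since products with a fixed presheaf do,
and every presheaf is a colimit of representables. So the comparison map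
`L (X ⊗ Y) ⟶ L X ⊗ L Y` is invertible as soon as it is for representable `Y`, and by symmetry for
representable `X`. This reduces everything to `y a ⊗ y b ≅ y (a ⨯ b)` and `⊤ ≅ y ⊤`, which
`L ∘ y ≅ f` preserves by hypothesis.
-/

open CategoryTheory MonoidalCategory CartesianMonoidalCategory
open CategoryTheory.Limits hiding prodComparison prodComparison_comp prodComparisonNatTrans

universe u

namespace CategoryTheory

lemma CartesianMonoidalCategory.isIso_prodComparison_swap {C D : Type*} [Category C]
    [Category D] [CartesianMonoidalCategory C] [BraidedCategory C] [CartesianMonoidalCategory D]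
    [BraidedCategory D] (F : C ⥤ D) (A B : C) [IsIso (prodComparison F A B)] :
    IsIso (prodComparison F B A) := by
  have : prodComparison F B A =
      F.map (β_ B A).hom ≫ prodComparison F A B ≫ (β_ (F.obj A) (F.obj B)).hom := by
    ext <;> simp [← F.map_comp]
  rw [this]
  infer_instance

namespace Presheaf

variable {C : Type u} [SmallCategory C]

lemma isIso_of_isIso_app_yoneda {E : Type*} [Category E] {L L' : (Cᵒᵖ ⥤ Type u) ⥤ E}
    [PreservesColimitsOfSize.{u, u} L] [PreservesColimitsOfSize.{u, u} L'] (α : L ⟶ L')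
    [∀ X : C, IsIso (α.app (yoneda.obj X))] : IsIso α := by
  have (P : Cᵒᵖ ⥤ Type u) : IsIso (α.app P) := by
    have : IsIso (Functor.whiskerLeft (CostructuredArrow.proj yoneda P ⋙ yoneda) α) := by
      rw [NatTrans.isIso_iff_isIso_app]
      exact fun x ↦ inferInstanceAs (IsIso (α.app (yoneda.obj x.left)))
    exact isIso_app_coconePt_of_preservesColimit _ α _ (isColimitTautologicalCocone P)
  exact NatIso.isIso_of_isIso_app α

lemma isLeftKanExtension_along_yoneda_iff {E : Type*} [Category.{u} E] {F : C ⥤ E}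
    [uliftYoneda.{u}.HasPointwiseLeftKanExtension F] (L : (Cᵒᵖ ⥤ Type u) ⥤ E)
    (α : F ⟶ yoneda ⋙ L) :
    L.IsLeftKanExtension α ↔ IsIso α ∧ PreservesColimitsOfSize.{u, u} L := by
  let e : uliftYoneda.{u} ⋙ 𝟭 _ ≅ (yoneda : C ⥤ _) :=
    uliftYoneda.rightUnitor ≪≫ uliftYonedaIsoYoneda
  have : IsIso (Functor.whiskerRight e.inv L ≫ (Functor.associator _ _ _).hom) :=
    (Functor.isoWhiskerRight e.symm L ≪≫ Functor.associator _ _ L).isIso_hom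
  rw [Functor.isLeftKanExtension_iff_postcomp₁ (𝟭 _) e α,
    isLeftKanExtension_along_uliftYoneda_iff, isIso_comp_right_iff]
  rfl

variable {D : Type*} [Category D] [CartesianMonoidalCategory D] (L : (Cᵒᵖ ⥤ Type u) ⥤ D)

lemma isIso_prodComparison_yoneda_obj [HasFiniteProducts C]
    [PreservesFiniteProducts (yoneda ⋙ L)] (a b : C) :
    IsIso (prodComparison L (yoneda.obj a) (yoneda.obj b)) := by
  let : CartesianMonoidalCategory C := .ofHasFiniteProducts
  exact IsIso.of_isIso_fac_left (prodComparison_comp yoneda L (A := a) (B := b)).symm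

lemma isIso_prodComparison_of_isIso_prodComparison_yoneda_obj
    [∀ X : D, PreservesColimitsOfSize.{u, u} (tensorLeft X)] [PreservesColimitsOfSize.{u, u} L]
    (X : Cᵒᵖ ⥤ Type u) [∀ b : C, IsIso (prodComparison L X (yoneda.obj b))]
    (Y : Cᵒᵖ ⥤ Type u) : IsIso (prodComparison L X Y) := by
  have (b : C) : IsIso ((prodComparisonNatTrans L X).app (yoneda.obj b)) :=
    inferInstanceAs (IsIso (prodComparison L X (yoneda.obj b)))
  have : IsIso (prodComparisonNatTrans L X) := isIso_of_isIso_app_yoneda _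
  exact inferInstanceAs (IsIso ((prodComparisonNatTrans L X).app Y))

theorem preservesFiniteProducts_of_preservesFiniteProducts_comp_yoneda [HasFiniteProducts C]
    [BraidedCategory D] [∀ X : D, PreservesColimitsOfSize.{u, u} (tensorLeft X)]
    [PreservesColimitsOfSize.{u, u} L] [PreservesFiniteProducts (yoneda ⋙ L)] :
    PreservesFiniteProducts L := by
  have := isIso_prodComparison_yoneda_obj L
  have (a : C) (Y : Cᵒᵖ ⥤ Type u) : IsIso (prodComparison L (yoneda.obj a) Y) :=
    isIso_prodComparison_of_isIso_prodComparison_yoneda_obj L _ Y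
  have (X : Cᵒᵖ ⥤ Type u) (b : C) : IsIso (prodComparison L X (yoneda.obj b)) :=
    isIso_prodComparison_swap L _ _
  have (X Y : Cᵒᵖ ⥤ Type u) : IsIso (prodComparison L X Y) :=
    isIso_prodComparison_of_isIso_prodComparison_yoneda_obj L X Y
  have := preservesLimitsOfShape_discrete_walkingPair_of_isIso_prodComparison L
  have : PreservesLimit (Functor.empty.{0} _) L := preservesTerminal_of_iso L
    (L.mapIso (PreservesTerminal.iso yoneda).symm ≪≫ PreservesTerminal.iso (yoneda ⋙ L))
  have := preservesLimitsOfShape_pempty_of_preservesTerminal L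
  exact .of_preserves_binary_and_terminal L

end Presheaf

end CategoryTheory

theorem leftKanExtension_along_yoneda_preserves_finite_products_general
    {A B : Type u} [SmallCategory A] [SmallCategory B]
    [HasFiniteProducts A]
    (f : A ⥤ (Bᵒᵖ ⥤ Type u)) [PreservesFiniteProducts f] :
    Nonempty (PreservesFiniteProducts (yoneda.leftKanExtension f)) := by
  obtain ⟨_, _⟩ := (Presheaf.isLeftKanExtension_along_yoneda_iff _
    (yoneda.leftKanExtensionUnit f)).mp inferInstance
  have : PreservesFiniteProducts (yoneda ⋙ yoneda.leftKanExtension f) :=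
    ⟨fun _ ↦ preservesLimitsOfShape_of_natIso (asIso (yoneda.leftKanExtensionUnit f))⟩
  exact ⟨Presheaf.preservesFiniteProducts_of_preservesFiniteProducts_comp_yoneda _⟩

/-- If `A`, `B` are small categories with finite products and `f : A ⥤ [Bᵒᵖ, Type]`
preserves finite products, then the left Kan extension of `f` along the Yoneda
embedding also preserves finite products. -/
theorem leftKanExtension_along_yoneda_preserves_finite_products
    {A B : Type u} [SmallCategory A] [SmallCategory B]
    [HasFiniteProducts A] [HasFiniteProducts B]
    (f : A ⥤ (Bᵒᵖ ⥤ Type u)) [PreservesFiniteProducts f] :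
    Nonempty (PreservesFiniteProducts (yoneda.leftKanExtension f)) :=
  leftKanExtension_along_yoneda_preserves_finite_products_general f
end

section
/- Let A be a small monoidal category. The Day convolution monoidal structure on the presheaf category [Aᵒᵖ, Type] makes the Yoneda embedding y : A ⥤ [Aᵒᵖ, Type] a strong monoidal functor: there are natural isomorphisms y(a) ⊛ y(b) ≅ y(a ⊗ b) and 𝟙_Day ≅ y(𝟙_A), coherent with the associators and unitors. -/
/-!
Every element of `F ⊛ G` at `c` is the restriction along some `c ⟶ a ⊗ b` of a generic element
`ι x y ∈ (F ⊛ G)(a ⊗ b)`, and the only relations among generic elements are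
`ι (u^* x) (v^* y) = (u ⊗ v)^* (ι x y)`. So a map out of `F ⊛ G` is a family `F a × G b → H (a ⊗ b)`
natural in `a` and `b`, and two maps out of an iterated convolution agree as soon as they agree on
iterated generic elements. On generic elements the associator, the unitors and the tensorator of
Yoneda, `ι f g ↦ f ⊗ g`, are given by the corresponding structure maps of `A`, so every coherence
axiom reduces to the same axiom in `A`.
-/

open CategoryTheory Opposite MonoidalCategory

universe u

namespace DayConv

variable {A : Type u} [SmallCategory A] [MonoidalCategory A]

/-- Data for an element of the Day convolution coend
`(F ⊛ G)(c) = ∫^{a,b} A(c, a ⊗ b) × F(a) × G(b)`. -/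
structure Pt (F G : Aᵒᵖ ⥤ Type u) (c : Aᵒᵖ) : Type u where
  a : A
  b : A
  h : c.unop ⟶ a ⊗ b
  x : F.obj (op a)
  y : G.obj (op b)

/-- The coend relation for Day convolution. -/
inductive Rel (F G : Aᵒᵖ ⥤ Type u) (c : Aᵒᵖ) : Pt F G c → Pt F G c → Prop
  | mk {a a' b b' : A} (u : a ⟶ a') (v : b ⟶ b') (h : c.unop ⟶ a ⊗ b)
      (x : F.obj (op a')) (y : G.obj (op b')) :
      Rel F G c ⟨a, b, h, F.map u.op x, G.map v.op y⟩ ⟨a', b', h ≫ (u ⊗ₘ v), x, y⟩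

/-- The Day convolution tensor product of two presheaves, on objects. -/
def DayObj (F G : Aᵒᵖ ⥤ Type u) : Aᵒᵖ ⥤ Type u where
  obj c := Quot (Rel F G c)
  map {c c'} w :=
    TypeCat.ofHom (Quot.lift (fun (p : Pt F G c) => Quot.mk (Rel F G c') ⟨p.a, p.b, w.unop ≫ p.h, p.x, p.y⟩)
      (by
        rintro p q r
        cases r with
        | mk u v h x y =>
          have hq := Quot.sound (Rel.mk (F := F) (G := G) (c := c')
            u v (w.unop ≫ h) x y)
          simpa [Category.assoc] using hq))
  map_id c := by
    ext z
    induction z using Quot.ind with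
    | _ p =>
      show Quot.mk (Rel F G c) ⟨p.a, p.b, (𝟙 c).unop ≫ p.h, p.x, p.y⟩ = Quot.mk (Rel F G c) p
      rw [show (𝟙 c).unop ≫ p.h = p.h by simp]
  map_comp {c c' c''} w w' := by
    ext z
    induction z using Quot.ind with
    | _ p =>
      show Quot.mk (Rel F G c'') ⟨p.a, p.b, (w ≫ w').unop ≫ p.h, p.x, p.y⟩
        = Quot.mk (Rel F G c'') ⟨p.a, p.b, w'.unop ≫ w.unop ≫ p.h, p.x, p.y⟩
      rw [show (w ≫ w').unop ≫ p.h = w'.unop ≫ w.unop ≫ p.h by simp]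

namespace DayObj

variable {F G H X : Aᵒᵖ ⥤ Type u}

def ι {a b : A} (x : F.obj (op a)) (y : G.obj (op b)) : (DayObj F G).obj (op (a ⊗ b)) :=
  Quot.mk _ ⟨a, b, 𝟙 _, x, y⟩

lemma mk_eq_map_ι {c : Aᵒᵖ} (p : Pt F G c) :
    Quot.mk (Rel F G c) p = (DayObj F G).map p.h.op (ι p.x p.y) := by
  obtain ⟨a, b, h, x, y⟩ := p
  change _ = Quot.mk _ (Pt.mk a b (h ≫ 𝟙 _) x y)
  rw [Category.comp_id]

lemma ι_map {a a' b b' : A} (u : a ⟶ a') (v : b ⟶ b') (x : F.obj (op a')) (y : G.obj (op b')) :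
    ι (F.map u.op x) (G.map v.op y) = (DayObj F G).map (u ⊗ₘ v).op (ι x y) := by
  refine (Quot.sound (Rel.mk u v (𝟙 _) x y)).trans ?_
  change _ = Quot.mk _ (Pt.mk _ _ (_ ≫ 𝟙 _) _ _)
  simp

lemma ι_map_left {a a' b : A} (u : a ⟶ a') (x : F.obj (op a')) (y : G.obj (op b)) :
    ι (F.map u.op x) y = (DayObj F G).map (u ▷ b).op (ι x y) := by
  simpa using ι_map (G := G) u (𝟙 b) x y

lemma ι_map_right {a b b' : A} (v : b ⟶ b') (x : F.obj (op a)) (y : G.obj (op b')) :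
    ι x (G.map v.op y) = (DayObj F G).map (a ◁ v).op (ι x y) := by
  simpa using ι_map (F := F) (𝟙 a) v x y

lemma induction_on {c : Aᵒᵖ} {P : (DayObj F G).obj c → Prop} (z : (DayObj F G).obj c)
    (h : ∀ a b (f : c.unop ⟶ a ⊗ b) x y, P ((DayObj F G).map f.op (ι x y))) : P z := by
  induction z using Quot.ind with
  | mk p => rw [mk_eq_map_ι]; exact h _ _ _ _ _

lemma hom_ext {α β : DayObj F G ⟶ X}
    (h : ∀ a b (x : F.obj (op a)) (y : G.obj (op b)), α.app _ (ι x y) = β.app _ (ι x y)) :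
    α = β := by
  ext c z
  induction z using induction_on with
  | h a b f x y => simp only [TypeCat.Fun.toFun_apply, NatTrans.naturality_apply, h]

def desc (φ : ∀ a b, F.obj (op a) → G.obj (op b) → X.obj (op (a ⊗ b)))
    (hφ : ∀ {a a' b b'} (u : a ⟶ a') (v : b ⟶ b') x y,
      φ a b (F.map u.op x) (G.map v.op y) = X.map (u ⊗ₘ v).op (φ a' b' x y)) :
    DayObj F G ⟶ X where
  app c := TypeCat.ofHom (Quot.lift (fun p => X.map p.h.op (φ p.a p.b p.x p.y)) (by
    rintro _ _ ⟨u, v, h, x, y⟩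
    simp [hφ]))
  naturality c c' w := by
    ext z
    induction z using Quot.ind with
    | mk p =>
      change X.map (w.unop ≫ p.h).op _ = X.map w (X.map p.h.op _)
      simp

@[simp]
lemma desc_app_ι (φ : ∀ a b, F.obj (op a) → G.obj (op b) → X.obj (op (a ⊗ b))) hφ {a b : A}
    (x : F.obj (op a)) (y : G.obj (op b)) :
    (desc φ hφ).app _ (ι x y) = φ a b x y := by
  change X.map (𝟙 _).op _ = _
  simp

section Curry

variable {P : Aᵒᵖ ⥤ Type u}

def curryLeft (α : DayObj P H ⟶ X) {d : A} (z : H.obj (op d)) : P ⟶ (tensorRight d).op ⋙ X where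
  app e := TypeCat.ofHom fun W => α.app (op (e.unop ⊗ d)) (ι W z)
  naturality e e' u := by
    ext W
    change α.app _ (ι (P.map u.unop.op W) z) = X.map (u.unop ▷ d).op (α.app _ (ι W z))
    rw [ι_map_left, NatTrans.naturality_apply]

@[simp]
lemma curryLeft_app_apply (α : DayObj P H ⟶ X) {d : A} (z : H.obj (op d)) {e : Aᵒᵖ}
    (W : P.obj e) :
    (curryLeft α z).app e W = α.app (op (e.unop ⊗ d)) (ι W z) :=
  rfl

lemma hom_ext_left {α β : DayObj P H ⟶ X}
    (h : ∀ d (z : H.obj (op d)), curryLeft α z = curryLeft β z) : α = β :=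
  hom_ext fun e d W z => congr_arg (fun γ => γ.app (op e) W) (h d z)

def curryRight (α : DayObj F P ⟶ X) {a : A} (x : F.obj (op a)) : P ⟶ (tensorLeft a).op ⋙ X where
  app e := TypeCat.ofHom fun W => α.app (op (a ⊗ e.unop)) (ι x W)
  naturality e e' u := by
    ext W
    change α.app _ (ι x (P.map u.unop.op W)) = X.map (a ◁ u.unop).op (α.app _ (ι x W))
    rw [ι_map_right, NatTrans.naturality_apply]

lemma hom_ext_right {α β : DayObj F P ⟶ X}
    (h : ∀ a (x : F.obj (op a)), curryRight α x = curryRight β x) : α = β :=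
  hom_ext fun a e x W => congr_arg (fun γ => γ.app (op e) W) (h a x)

end Curry

lemma hom_ext₃ {α β : DayObj (DayObj F G) H ⟶ X}
    (h : ∀ a b d (x : F.obj (op a)) (y : G.obj (op b)) (z : H.obj (op d)),
      α.app _ (ι (ι x y) z) = β.app _ (ι (ι x y) z)) : α = β :=
  hom_ext_left fun d z => hom_ext fun a b x y => h a b d x y z

lemma hom_ext₃' {α β : DayObj F (DayObj G H) ⟶ X}
    (h : ∀ a b d (x : F.obj (op a)) (y : G.obj (op b)) (z : H.obj (op d)),
      α.app _ (ι x (ι y z)) = β.app _ (ι x (ι y z))) : α = β :=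
  hom_ext_right fun a x => hom_ext fun b d y z => h a b d x y z

def desc₃ (φ : ∀ a b d, F.obj (op a) → G.obj (op b) → H.obj (op d) → X.obj (op ((a ⊗ b) ⊗ d)))
    (hφ : ∀ {a a' b b' d d'} (u : a ⟶ a') (v : b ⟶ b') (w : d ⟶ d') x y z,
      φ a b d (F.map u.op x) (G.map v.op y) (H.map w.op z)
        = X.map ((u ⊗ₘ v) ⊗ₘ w).op (φ a' b' d' x y z)) :
    DayObj (DayObj F G) H ⟶ X :=
  -- for fixed `z`, `φ · · d · · z` first descends to a map `F ⊛ G ⟶ X((-) ⊗ d)`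
  desc (fun e d W z => (desc (X := (tensorRight d).op ⋙ X) (fun a b x y => φ a b d x y z)
      (fun u v x y => by simpa using hφ u v (𝟙 d) x y z)).app (op e) W)
    (by
      intro e e' d d' U V W z
      induction W using induction_on with | h a b f x y => ?_
      have hV : φ a b d x y (H.map V.op z) = X.map ((a ⊗ b) ◁ V).op (φ a b d' x y z) := by
        simpa using hφ (𝟙 a) (𝟙 b) V x y z
      simp only [NatTrans.naturality_apply, desc_app_ι, hV, Functor.comp_map, Functor.op_map,
        Quiver.Hom.unop_op, Functor.flip_obj_map, curriedTensor_map_app, ← Functor.map_comp_apply,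
        ← op_comp]
      congr 3
      refine congrArg Quiver.Hom.op ?_
      simp only [MonoidalCategory.tensorHom_def, comp_whiskerRight, Category.assoc,
        whisker_exchange])

@[simp]
lemma desc₃_app_ι_ι
    (φ : ∀ a b d, F.obj (op a) → G.obj (op b) → H.obj (op d) → X.obj (op ((a ⊗ b) ⊗ d))) hφ
    {a b d : A} (x : F.obj (op a)) (y : G.obj (op b)) (z : H.obj (op d)) :
    (desc₃ φ hφ).app _ (ι (ι x y) z) = φ a b d x y z := by
  rw [desc₃, desc_app_ι, desc_app_ι]

def desc₃' (φ : ∀ a b d, F.obj (op a) → G.obj (op b) → H.obj (op d) → X.obj (op (a ⊗ (b ⊗ d))))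
    (hφ : ∀ {a a' b b' d d'} (u : a ⟶ a') (v : b ⟶ b') (w : d ⟶ d') x y z,
      φ a b d (F.map u.op x) (G.map v.op y) (H.map w.op z)
        = X.map (u ⊗ₘ (v ⊗ₘ w)).op (φ a' b' d' x y z)) :
    DayObj F (DayObj G H) ⟶ X :=
  desc (fun a e x W => (desc (X := (tensorLeft a).op ⋙ X) (fun b d y z => φ a b d x y z)
      (fun v w y z => by simpa using hφ (𝟙 a) v w x y z)).app (op e) W)
    (by
      intro a a' e e' U V x W
      induction W using induction_on with | h b d f y z => ?_
      have hU : φ a b d (F.map U.op x) y z = X.map (U ▷ (b ⊗ d)).op (φ a' b d x y z) := by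
        simpa using hφ U (𝟙 b) (𝟙 d) x y z
      simp only [NatTrans.naturality_apply, desc_app_ι, hU, Functor.comp_map, Functor.op_map,
        Quiver.Hom.unop_op, curriedTensor_obj_map, ← Functor.map_comp_apply, ← op_comp]
      congr 3
      refine congrArg Quiver.Hom.op ?_
      rw [MonoidalCategory.tensorHom_def, whisker_exchange, whiskerLeft_comp, Category.assoc])

@[simp]
lemma desc₃'_app_ι_ι
    (φ : ∀ a b d, F.obj (op a) → G.obj (op b) → H.obj (op d) → X.obj (op (a ⊗ (b ⊗ d)))) hφ
    {a b d : A} (x : F.obj (op a)) (y : G.obj (op b)) (z : H.obj (op d)) :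
    (desc₃' φ hφ).app _ (ι x (ι y z)) = φ a b d x y z := by
  rw [desc₃', desc_app_ι, desc_app_ι]

variable {F' G' : Aᵒᵖ ⥤ Type u}

def map (α : F ⟶ F') (β : G ⟶ G') : DayObj F G ⟶ DayObj F' G' :=
  desc (fun _ _ x y => ι (α.app _ x) (β.app _ y)) (fun u v x y => by
    simp only [NatTrans.naturality_apply, ι_map])

@[simp]
lemma map_app_ι (α : F ⟶ F') (β : G ⟶ G') {a b : A} (x : F.obj (op a)) (y : G.obj (op b)) :
    (map α β).app _ (ι x y) = ι (α.app _ x) (β.app _ y) :=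
  desc_app_ι _ _ x y

def associator (F G H : Aᵒᵖ ⥤ Type u) : DayObj (DayObj F G) H ≅ DayObj F (DayObj G H) where
  hom := desc₃ (fun a b d x y z => (DayObj F (DayObj G H)).map (α_ a b d).hom.op (ι x (ι y z)))
    (fun u v w x y z => by
      simp only [ι_map, ← Functor.map_comp_apply, ← op_comp, associator_naturality])
  inv := desc₃' (fun a b d x y z => (DayObj (DayObj F G) H).map (α_ a b d).inv.op (ι (ι x y) z))
    (fun u v w x y z => by
      simp only [ι_map, ← Functor.map_comp_apply, ← op_comp, associator_inv_naturality])
  hom_inv_id := hom_ext₃ fun a b d x y z => by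
    simp only [NatTrans.comp_app_apply, desc₃_app_ι_ι, NatTrans.naturality_apply, desc₃'_app_ι_ι,
      ← Functor.map_comp_apply, ← op_comp, Iso.hom_inv_id, op_id, Functor.map_id_apply,
      NatTrans.id_app, id_apply]
  inv_hom_id := hom_ext₃' fun a b d x y z => by
    simp only [NatTrans.comp_app_apply, desc₃_app_ι_ι, NatTrans.naturality_apply, desc₃'_app_ι_ι,
      ← Functor.map_comp_apply, ← op_comp, Iso.inv_hom_id, op_id, Functor.map_id_apply,
      NatTrans.id_app, id_apply]

@[simp]
lemma associator_hom_app_ι_ι {a b d : A} (x : F.obj (op a)) (y : G.obj (op b)) (z : H.obj (op d)) :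
    (associator F G H).hom.app _ (ι (ι x y) z)
      = (DayObj F (DayObj G H)).map (α_ a b d).hom.op (ι x (ι y z)) := by
  dsimp only [associator]
  exact desc₃_app_ι_ι _ _ x y z

lemma ι_id_left {a b : A} (f : a ⟶ 𝟙_ A) (y : F.obj (op b)) :
    ι (F := yoneda.obj (𝟙_ A)) f y = (DayObj _ F).map (f ▷ b).op (ι (𝟙 (𝟙_ A)) y) := by
  rw [← ι_map_left]
  simp

lemma ι_id_right {a b : A} (x : F.obj (op a)) (f : b ⟶ 𝟙_ A) :
    ι (G := yoneda.obj (𝟙_ A)) x f = (DayObj F _).map (a ◁ f).op (ι x (𝟙 (𝟙_ A))) := by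
  rw [← ι_map_right]
  simp

def leftUnitor (F : Aᵒᵖ ⥤ Type u) : DayObj (yoneda.obj (𝟙_ A)) F ≅ F where
  hom := desc (fun _ b f y => F.map (f ▷ b ≫ (λ_ b).hom).op y) (fun u v f y => by
    simp only [yoneda_obj_map, ConcreteCategory.hom_ofHom, TypeCat.Fun.coe_mk, Quiver.Hom.unop_op,
      ← Functor.map_comp_apply, ← op_comp]
    congr 3
    refine congrArg Quiver.Hom.op ?_
    simp only [MonoidalCategory.tensorHom_def, comp_whiskerRight, Category.assoc,
      whisker_exchange_assoc, leftUnitor_naturality])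
  inv :=
    { app c := TypeCat.ofHom fun x => (DayObj _ F).map (λ_ c.unop).inv.op (ι (𝟙 (𝟙_ A)) x)
      naturality c c' w := by
        ext x
        change (DayObj _ F).map (λ_ c'.unop).inv.op
            (ι (F := yoneda.obj _) (𝟙 _) (F.map w.unop.op x))
          = (DayObj _ F).map w.unop.op
              ((DayObj _ F).map (λ_ c.unop).inv.op (ι (F := yoneda.obj _) (𝟙 _) x))
        simp only [ι_map_right, ← Functor.map_comp_apply, ← op_comp, leftUnitor_inv_naturality] }
  hom_inv_id := hom_ext fun a b f y => by
    rw [NatTrans.comp_app_apply, desc_app_ι]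
    change (DayObj _ F).map _ (ι _ (F.map _ y)) = _
    simp only [ι_map_right, ← Functor.map_comp_apply, ← op_comp, ι_id_left f y, NatTrans.id_app,
      id_apply]
    congr 3
    refine congrArg Quiver.Hom.op ?_
    simp only [← leftUnitor_inv_naturality, Category.assoc, Iso.hom_inv_id, Category.comp_id]
  inv_hom_id := by
    ext c x
    simp only [TypeCat.Fun.toFun_apply, NatTrans.comp_app_apply, ConcreteCategory.hom_ofHom,
      TypeCat.Fun.coe_mk, NatTrans.id_app, id_apply]
    rw [NatTrans.naturality_apply, desc_app_ι, ← Functor.map_comp_apply, ← op_comp]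
    simp

def rightUnitor (F : Aᵒᵖ ⥤ Type u) : DayObj F (yoneda.obj (𝟙_ A)) ≅ F where
  hom := desc (fun a _ x f => F.map (a ◁ f ≫ (ρ_ a).hom).op x) (fun u v x f => by
    simp only [yoneda_obj_map, ConcreteCategory.hom_ofHom, TypeCat.Fun.coe_mk, Quiver.Hom.unop_op,
      ← Functor.map_comp_apply, ← op_comp]
    congr 3
    refine congrArg Quiver.Hom.op ?_
    simp only [MonoidalCategory.tensorHom_def, whiskerLeft_comp, Category.assoc,
      ← whisker_exchange_assoc, rightUnitor_naturality])
  inv :=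
    { app c := TypeCat.ofHom fun x => (DayObj F _).map (ρ_ c.unop).inv.op (ι x (𝟙 (𝟙_ A)))
      naturality c c' w := by
        ext x
        change (DayObj F _).map (ρ_ c'.unop).inv.op
            (ι (G := yoneda.obj _) (F.map w.unop.op x) (𝟙 _))
          = (DayObj F _).map w.unop.op
              ((DayObj F _).map (ρ_ c.unop).inv.op (ι (G := yoneda.obj _) x (𝟙 _)))
        simp only [ι_map_left, ← Functor.map_comp_apply, ← op_comp, rightUnitor_inv_naturality] }
  hom_inv_id := hom_ext fun a b x f => by
    rw [NatTrans.comp_app_apply, desc_app_ι]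
    change (DayObj F _).map _ (ι (F.map _ x) _) = _
    simp only [ι_map_left, ← Functor.map_comp_apply, ← op_comp, ι_id_right x f, NatTrans.id_app,
      id_apply]
    congr 3
    refine congrArg Quiver.Hom.op ?_
    simp only [← rightUnitor_inv_naturality, Category.assoc, Iso.hom_inv_id, Category.comp_id]
  inv_hom_id := by
    ext c x
    simp only [TypeCat.Fun.toFun_apply, NatTrans.comp_app_apply, ConcreteCategory.hom_ofHom,
      TypeCat.Fun.coe_mk, NatTrans.id_app, id_apply]
    rw [NatTrans.naturality_apply, desc_app_ι, ← Functor.map_comp_apply, ← op_comp]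
    simp

@[simp]
lemma leftUnitor_hom_app_ι {a b : A} (f : a ⟶ 𝟙_ A) (y : F.obj (op b)) :
    (leftUnitor F).hom.app _ (ι (F := yoneda.obj (𝟙_ A)) f y)
      = F.map (f ▷ b ≫ (λ_ b).hom).op y := by
  dsimp only [leftUnitor]
  exact desc_app_ι _ _ _ y

@[simp]
lemma rightUnitor_hom_app_ι {a b : A} (x : F.obj (op a)) (f : b ⟶ 𝟙_ A) :
    (rightUnitor F).hom.app _ (ι (G := yoneda.obj (𝟙_ A)) x f)
      = F.map (a ◁ f ≫ (ρ_ a).hom).op x := by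
  dsimp only [rightUnitor]
  exact desc_app_ι _ _ x _

variable {F₁ F₂ F₃ G₁ G₂ G₃ : Aᵒᵖ ⥤ Type u}

lemma map_id : map (𝟙 F) (𝟙 G) = 𝟙 (DayObj F G) :=
  hom_ext fun _ _ _ _ => by simp only [map_app_ι, NatTrans.id_app, id_apply]

lemma map_comp (α : F ⟶ F') (β : G ⟶ G') (α' : F' ⟶ F₁) (β' : G' ⟶ G₁) :
    map α β ≫ map α' β' = map (α ≫ α') (β ≫ β') :=
  hom_ext fun _ _ _ _ => by simp only [NatTrans.comp_app_apply, map_app_ι]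

lemma associator_naturality (f₁ : F₁ ⟶ G₁) (f₂ : F₂ ⟶ G₂) (f₃ : F₃ ⟶ G₃) :
    map (map f₁ f₂) f₃ ≫ (associator G₁ G₂ G₃).hom
      = (associator F₁ F₂ F₃).hom ≫ map f₁ (map f₂ f₃) :=
  hom_ext₃ fun _ _ _ _ _ _ => by
    simp only [NatTrans.comp_app_apply, map_app_ι, associator_hom_app_ι_ι,
      NatTrans.naturality_apply]

lemma leftUnitor_naturality (f : F ⟶ G) :
    map (𝟙 _) f ≫ (leftUnitor G).hom = (leftUnitor F).hom ≫ f :=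
  hom_ext fun _ _ _ _ => by
    simp only [NatTrans.comp_app_apply, map_app_ι, leftUnitor_hom_app_ι, NatTrans.naturality_apply,
      NatTrans.id_app, id_apply]

lemma rightUnitor_naturality (f : F ⟶ G) :
    map f (𝟙 _) ≫ (rightUnitor G).hom = (rightUnitor F).hom ≫ f :=
  hom_ext fun _ _ _ _ => by
    simp only [NatTrans.comp_app_apply, map_app_ι, rightUnitor_hom_app_ι, NatTrans.naturality_apply,
      NatTrans.id_app, id_apply]

lemma pentagon (F G H K : Aᵒᵖ ⥤ Type u) :
    map (associator F G H).hom (𝟙 K) ≫ (associator F (DayObj G H) K).hom ≫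
        map (𝟙 F) (associator G H K).hom
      = (associator (DayObj F G) H K).hom ≫ (associator F G (DayObj H K)).hom :=
  hom_ext_left fun _ _ => hom_ext₃ fun _ _ _ _ _ _ => by
    simp only [curryLeft_app_apply, NatTrans.comp_app_apply, map_app_ι, associator_hom_app_ι_ι,
      NatTrans.naturality_apply, NatTrans.id_app, id_apply, ι_map_left, ι_map_right,
      ← Functor.map_comp_apply, ← op_comp]
    congr 3
    refine congrArg Quiver.Hom.op ?_
    simp

lemma triangle (F G : Aᵒᵖ ⥤ Type u) :
    (associator F (yoneda.obj (𝟙_ A)) G).hom ≫ map (𝟙 F) (leftUnitor G).hom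
      = map (rightUnitor F).hom (𝟙 G) :=
  hom_ext₃ fun _ _ _ _ _ _ => by
    simp only [NatTrans.comp_app_apply, map_app_ι, associator_hom_app_ι_ι,
      NatTrans.naturality_apply, leftUnitor_hom_app_ι, rightUnitor_hom_app_ι, NatTrans.id_app,
      id_apply, ι_map_left, ι_map_right, ← Functor.map_comp_apply, ← op_comp]
    congr 3
    refine congrArg Quiver.Hom.op ?_
    simp

def yonedaTensorIso (a b : A) : DayObj (yoneda.obj a) (yoneda.obj b) ≅ yoneda.obj (a ⊗ b) where
  hom := desc (fun _ _ f g => f ⊗ₘ g) (fun u v f g => by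
    simp [tensorHom_comp_tensorHom])
  inv := yonedaEquiv.symm (ι (𝟙 a) (𝟙 b))
  hom_inv_id := hom_ext fun _ _ f g => by
    simp only [NatTrans.comp_app_apply, desc_app_ι, yonedaEquiv_symm_app,
      ConcreteCategory.hom_ofHom, TypeCat.Fun.coe_mk, ← ι_map]
    simp
  inv_hom_id := by
    ext ⟨c⟩ k
    simp only [TypeCat.Fun.toFun_apply, NatTrans.comp_app_apply, NatTrans.id_app, id_apply,
      yonedaEquiv_symm_app, ConcreteCategory.hom_ofHom, TypeCat.Fun.coe_mk]
    rw [NatTrans.naturality_apply, desc_app_ι]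
    simp

@[simp]
lemma yonedaTensorIso_hom_app_ι {a b a' b' : A} (f : a' ⟶ a) (g : b' ⟶ b) :
    (yonedaTensorIso a b).hom.app _ (ι (F := yoneda.obj a) (G := yoneda.obj b) f g) = f ⊗ₘ g := by
  dsimp only [yonedaTensorIso]
  exact desc_app_ι _ _ _ _

lemma yonedaTensorIso_hom_natural_left {a a' : A} (f : a ⟶ a') (b : A) :
    map (yoneda.map f) (𝟙 _) ≫ (yonedaTensorIso a' b).hom
      = (yonedaTensorIso a b).hom ≫ yoneda.map (f ▷ b) :=
  hom_ext fun _ _ g₁ g₂ => by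
    simp only [NatTrans.comp_app_apply, map_app_ι, yonedaTensorIso_hom_app_ι, NatTrans.id_app,
      id_apply]
    simp [MonoidalCategory.tensorHom_def, whisker_exchange]

lemma yonedaTensorIso_hom_natural_right (a : A) {b b' : A} (f : b ⟶ b') :
    map (𝟙 _) (yoneda.map f) ≫ (yonedaTensorIso a b').hom
      = (yonedaTensorIso a b).hom ≫ yoneda.map (a ◁ f) :=
  hom_ext fun _ _ g₁ g₂ => by
    simp only [NatTrans.comp_app_apply, map_app_ι, yonedaTensorIso_hom_app_ι, NatTrans.id_app,
      id_apply]
    simp [MonoidalCategory.tensorHom_def]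

lemma yonedaTensorIso_associativity (a b d : A) :
    map (yonedaTensorIso a b).hom (𝟙 _) ≫ (yonedaTensorIso (a ⊗ b) d).hom
        ≫ yoneda.map (α_ a b d).hom
      = (associator _ _ _).hom ≫ map (𝟙 _) (yonedaTensorIso b d).hom
        ≫ (yonedaTensorIso a (b ⊗ d)).hom :=
  hom_ext₃ fun _ _ _ g₁ g₂ g₃ => by
    simp only [NatTrans.comp_app_apply, map_app_ι, yonedaTensorIso_hom_app_ι,
      associator_hom_app_ι_ι, NatTrans.naturality_apply, NatTrans.id_app, id_apply]
    simp

lemma yonedaTensorIso_left_unitality (a : A) :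
    (leftUnitor (yoneda.obj a)).hom = (yonedaTensorIso (𝟙_ A) a).hom ≫ yoneda.map (λ_ a).hom :=
  hom_ext fun _ _ g₁ g₂ => by
    simp only [NatTrans.comp_app_apply, yonedaTensorIso_hom_app_ι, leftUnitor_hom_app_ι]
    simp [MonoidalCategory.tensorHom_def]

lemma yonedaTensorIso_right_unitality (a : A) :
    (rightUnitor (yoneda.obj a)).hom = (yonedaTensorIso a (𝟙_ A)).hom ≫ yoneda.map (ρ_ a).hom :=
  hom_ext fun _ _ g₁ g₂ => by
    simp only [NatTrans.comp_app_apply, yonedaTensorIso_hom_app_ι, rightUnitor_hom_app_ι]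
    simp [tensorHom_def']

end DayObj

open DayObj

abbrev monoidalCategoryStruct : MonoidalCategoryStruct (Aᵒᵖ ⥤ Type u) where
  tensorObj := DayObj
  whiskerLeft F _ _ β := DayObj.map (𝟙 F) β
  whiskerRight α G := DayObj.map α (𝟙 G)
  tensorHom := DayObj.map
  tensorUnit := yoneda.obj (𝟙_ A)
  associator := DayObj.associator
  leftUnitor := DayObj.leftUnitor
  rightUnitor := DayObj.rightUnitor

abbrev monoidalCategory : MonoidalCategory (Aᵒᵖ ⥤ Type u) :=
  letI := monoidalCategoryStruct (A := A)
  .ofTensorHom (fun _ _ => map_id) (by intros; rfl) (by intros; rfl) map_comp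
    DayObj.associator_naturality DayObj.leftUnitor_naturality DayObj.rightUnitor_naturality
    DayObj.pentagon DayObj.triangle

def yonedaCoreMonoidal : letI := monoidalCategory (A := A); (yoneda : A ⥤ _).CoreMonoidal :=
  letI := monoidalCategory (A := A)
  { εIso := Iso.refl _
    μIso := yonedaTensorIso
    μIso_hom_natural_left := yonedaTensorIso_hom_natural_left
    μIso_hom_natural_right := fun a f => yonedaTensorIso_hom_natural_right a f
    associativity := yonedaTensorIso_associativity
    left_unitality a := by
      rw [Iso.refl_hom, id_whiskerRight, Category.id_comp]
      exact yonedaTensorIso_left_unitality a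
    right_unitality a := by
      rw [Iso.refl_hom, whiskerLeft_id, Category.id_comp]
      exact yonedaTensorIso_right_unitality a }

/-- The Day convolution monoidal structure on the presheaf category of a small monoidal
category makes the Yoneda embedding a strong monoidal functor: there is a monoidal
structure whose tensor is the Day convolution and whose unit is `y(𝟙_A)`, for which
`yoneda` carries a (strong) monoidal functor structure; in particular there are coherent
natural isomorphisms `y a ⊛ y b ≅ y (a ⊗ b)` and `𝟙_Day ≅ y (𝟙_A)`. -/
theorem yoneda_strong_monoidal_for_day_convolution :
    ∃ instM : MonoidalCategory (Aᵒᵖ ⥤ Type u),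
      (∀ F G : Aᵒᵖ ⥤ Type u, @MonoidalCategory.tensorObj _ _ instM.toMonoidalCategoryStruct F G = DayObj F G) ∧
      (@MonoidalCategory.tensorUnit _ _ instM.toMonoidalCategoryStruct = yoneda.obj (𝟙_ A)) ∧
      Nonempty (@Functor.Monoidal A _ _ (Aᵒᵖ ⥤ Type u) _ instM yoneda) :=
  letI := monoidalCategory (A := A)
  ⟨monoidalCategory, fun _ _ => rfl, rfl, ⟨yonedaCoreMonoidal.toMonoidal⟩⟩

end DayConv
end

section
/- Given a Kleisli structure P on a subcategory inclusion A ↪ K of bicategories (with units y_a : a ⟶ P a, extension functors (-)^♯ : K(a, P b) ⥤ K(P a, P b), and coherent invertible 2-cells η_f : f ⟶ f^♯ ∘ y_a, κ_a : (y_a)^♯ ⟶ id_{P a}, κ_{g,f} : (g^♯ ∘ f)^♯ ⟶ g^♯ ∘ f^♯), the data with objects those of A, hom-categories Kl(P)(a,b) := K(a, P b), identities y_a, and composition g · f := g^♯ ∘ f forms a bicategory (i.e., the induced unitors and associator derived from η, κ satisfy the pentagon and triangle coherence axioms). -/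
/-!
The pentagon coherence of the Kleisli structure, solved for `(-)^♯` applied to the Kleisli
associator, expresses that 2-cell through `κ` and the associator of `K`; likewise the unit
coherence expresses `(η_f⁻¹)^♯` through `κ`, `κ_a` and the left unitor of `K`. Substituting
these, the `κ`s cancel and the Kleisli pentagon and triangle become Mac Lane's pentagon and
the triangle identity in `K`, up to naturality of the associator.
-/

open CategoryTheory Bicategory

universe w v u u₂

/-- A Kleisli structure `P` on a (sub-bi)category of objects `ι : J → K` of a bicategory
`K`: units `y a : ι a ⟶ P a`, extension functors `(-)^♯ : K(ι a, P b) ⥤ K(P a, P b)`,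
and coherent natural invertible 2-cells
`η_f : f ≅ f^♯ ∘ y_a`, `κ_a : (y_a)^♯ ≅ 𝟙 (P a)`, `κ_{g,f} : (g^♯ ∘ f)^♯ ≅ g^♯ ∘ f^♯`,
subject to unit and pentagon coherence conditions. -/
structure KleisliStructure (K : Type u) [Bicategory.{w, v} K] (J : Type u₂)
    (ι : J → K) where
  P : J → K
  y : ∀ a : J, ι a ⟶ P a
  sharp : ∀ {a b : J}, (ι a ⟶ P b) ⥤ (P a ⟶ P b)
  eta : ∀ {a b : J} (f : ι a ⟶ P b), f ≅ y a ≫ sharp.obj f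
  kapId : ∀ a : J, sharp.obj (y a) ≅ 𝟙 (P a)
  kap : ∀ {a b c : J} (f : ι a ⟶ P b) (g : ι b ⟶ P c),
    sharp.obj (f ≫ sharp.obj g) ≅ sharp.obj f ≫ sharp.obj g
  /-- naturality of `η` -/
  eta_natural : ∀ {a b : J} {f f' : ι a ⟶ P b} (θ : f ⟶ f'),
    θ ≫ (eta f').hom = (eta f).hom ≫ y a ◁ sharp.map θ
  /-- naturality of `κ` in the first variable -/
  kap_natural_left : ∀ {a b c : J} {f f' : ι a ⟶ P b} (θ : f ⟶ f') (g : ι b ⟶ P c),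
    sharp.map (θ ▷ sharp.obj g) ≫ (kap f' g).hom
      = (kap f g).hom ≫ sharp.map θ ▷ sharp.obj g
  /-- naturality of `κ` in the second variable -/
  kap_natural_right : ∀ {a b c : J} (f : ι a ⟶ P b) {g g' : ι b ⟶ P c} (δ : g ⟶ g'),
    sharp.map (f ◁ sharp.map δ) ≫ (kap f g').hom
      = (kap f g).hom ≫ sharp.obj f ◁ sharp.map δ
  /-- unit coherence -/
  unit_coh : ∀ {a b : J} (f : ι a ⟶ P b),
    sharp.map (eta f).hom ≫ (kap (y a) f).hom ≫ (kapId a).hom ▷ sharp.obj f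
      ≫ (λ_ (sharp.obj f)).hom = 𝟙 (sharp.obj f)
  /-- pentagon coherence -/
  pentagon_coh : ∀ {a b c d : J} (f : ι a ⟶ P b) (g : ι b ⟶ P c) (h : ι c ⟶ P d),
    (kap (f ≫ sharp.obj g) h).hom ≫ (kap f g).hom ▷ sharp.obj h
      = sharp.map ((α_ f (sharp.obj g) (sharp.obj h)).hom ≫ f ◁ (kap g h).inv)
          ≫ (kap f (g ≫ sharp.obj h)).hom ≫ sharp.obj f ◁ (kap g h).hom
          ≫ (α_ (sharp.obj f) (sharp.obj g) (sharp.obj h)).inv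

namespace KleisliStructure

variable {K : Type u} [Bicategory.{w, v} K] {J : Type u₂} {ι : J → K}
  (S : KleisliStructure K J ι)

def associator {a b c d : J} (f : ι a ⟶ S.P b) (g : ι b ⟶ S.P c) (h : ι c ⟶ S.P d) :
    (f ≫ S.sharp.obj g) ≫ S.sharp.obj h ⟶ f ≫ S.sharp.obj (g ≫ S.sharp.obj h) :=
  (α_ f (S.sharp.obj g) (S.sharp.obj h)).hom ≫ f ◁ (S.kap g h).inv

lemma sharp_map_associator {a b c d : J} (f : ι a ⟶ S.P b) (g : ι b ⟶ S.P c)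
    (h : ι c ⟶ S.P d) :
    S.sharp.map (S.associator f g h)
      = (S.kap (f ≫ S.sharp.obj g) h).hom ≫ (S.kap f g).hom ▷ S.sharp.obj h
          ≫ (α_ (S.sharp.obj f) (S.sharp.obj g) (S.sharp.obj h)).hom
          ≫ S.sharp.obj f ◁ (S.kap g h).inv ≫ (S.kap f (g ≫ S.sharp.obj h)).inv := by
  rw [reassoc_of% S.pentagon_coh f g h, associator]
  simp

lemma sharp_map_eta_inv {a b : J} (f : ι a ⟶ S.P b) :
    S.sharp.map (S.eta f).inv
      = (S.kap (S.y a) f).hom ≫ (S.kapId a).hom ▷ S.sharp.obj f ≫ (λ_ (S.sharp.obj f)).hom :=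
  Iso.inv_ext (f := S.sharp.mapIso (S.eta f)) (S.unit_coh f)

lemma associator_pentagon {a b c d e : J} (f : ι a ⟶ S.P b) (g : ι b ⟶ S.P c)
    (h : ι c ⟶ S.P d) (i : ι d ⟶ S.P e) :
    S.associator f g h ▷ S.sharp.obj i ≫ S.associator f (g ≫ S.sharp.obj h) i
        ≫ f ◁ S.sharp.map (S.associator g h i)
      = S.associator (f ≫ S.sharp.obj g) h i ≫ S.associator f g (h ≫ S.sharp.obj i) := by
  rw [sharp_map_associator]
  simp only [associator, Bicategory.whiskerLeft_comp, comp_whiskerRight, Category.assoc,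
    whiskerLeft_inv_hom_assoc]
  rw [associator_naturality_middle_assoc]
  simp only [← Bicategory.whiskerLeft_comp_assoc, inv_hom_whiskerRight_assoc]
  simp only [Bicategory.whiskerLeft_comp, Category.assoc]
  rw [pentagon_assoc, associator_naturality_right_assoc]

lemma associator_triangle {a b c : J} (f : ι a ⟶ S.P b) (g : ι b ⟶ S.P c) :
    S.associator f (S.y b) g ≫ f ◁ S.sharp.map (S.eta g).inv
      = (f ◁ (S.kapId b).hom ≫ (ρ_ f).hom) ▷ S.sharp.obj g := by
  rw [sharp_map_eta_inv]
  simp only [associator, Bicategory.whiskerLeft_comp, Category.assoc, whiskerLeft_inv_hom_assoc]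
  rw [← associator_naturality_middle_assoc, Bicategory.triangle]
  simp [comp_whiskerRight]

end KleisliStructure

/-- Given a Kleisli structure `P` on `ι : J → K`, the data with objects `J`,
hom-categories `Kl(P)(a,b) = K(ι a, P b)`, identities `y a` and composition
`g · f = f ≫ g^♯`, equipped with the unitors and associator derived from `η` and `κ`,
satisfies the pentagon and triangle coherence axioms of a bicategory. -/
theorem kleisli_structure_gives_bicategory {K : Type u} [Bicategory.{w, v} K]
    {J : Type u₂} {ι : J → K} (S : KleisliStructure K J ι) :
    -- Kleisli composition and whiskerings
    let kcomp : ∀ {a b c : J}, (ι a ⟶ S.P b) → (ι b ⟶ S.P c) → (ι a ⟶ S.P c) :=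
      fun f g => f ≫ S.sharp.obj g
    let kwhiskR : ∀ {a b c : J} {f f' : ι a ⟶ S.P b} (_ : f ⟶ f') (g : ι b ⟶ S.P c),
        kcomp f g ⟶ kcomp f' g :=
      fun {a b c f f'} θ g => θ ▷ S.sharp.obj g
    let kwhiskL : ∀ {a b c : J} (f : ι a ⟶ S.P b) {g g' : ι b ⟶ S.P c} (_ : g ⟶ g'),
        kcomp f g ⟶ kcomp f g' :=
      fun {a b c} f {g g'} δ => f ◁ S.sharp.map δ
    -- the associator and unitors of the Kleisli bicategory
    let kassoc : ∀ {a b c d : J} (f : ι a ⟶ S.P b) (g : ι b ⟶ S.P c) (h : ι c ⟶ S.P d),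
        kcomp (kcomp f g) h ⟶ kcomp f (kcomp g h) :=
      fun f g h => (α_ f (S.sharp.obj g) (S.sharp.obj h)).hom ≫ f ◁ (S.kap g h).inv
    let klam : ∀ {a b : J} (f : ι a ⟶ S.P b), kcomp (S.y a) f ⟶ f :=
      fun f => (S.eta f).inv
    let krho : ∀ {a b : J} (f : ι a ⟶ S.P b), kcomp f (S.y b) ⟶ f :=
      fun {a b} f => f ◁ (S.kapId b).hom ≫ (ρ_ f).hom
    -- pentagon axiom
    (∀ {a b c d e : J} (f : ι a ⟶ S.P b) (g : ι b ⟶ S.P c) (h : ι c ⟶ S.P d)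
        (i : ι d ⟶ S.P e),
      kwhiskR (kassoc f g h) i ≫ kassoc f (kcomp g h) i ≫ kwhiskL f (kassoc g h i)
        = kassoc (kcomp f g) h i ≫ kassoc f g (kcomp h i)) ∧
    -- triangle axiom
    (∀ {a b c : J} (f : ι a ⟶ S.P b) (g : ι b ⟶ S.P c),
      kassoc f (S.y b) g ≫ kwhiskL f (klam g) = kwhiskR (krho f) g) := by
  exact ⟨S.associator_pentagon, S.associator_triangle⟩
end

section
/- A Kleisli structure P on A ↪ K underlies a pseudofunctor P : A ⥤ K: defining P f := (y_b ∘ f)^♯ on 1-cells, there are coherent invertible 2-cells P(id_a) ≅ id_{P a} and P g ∘ P f ≅ P(g ∘ f) (built from κ_a, κ_{g,f}, and η) satisfying the pseudofunctor coherence axioms. -/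
open CategoryTheory Bicategory

universe w v u u₂

/-!
Each extension functor `(-)^♯` is faithful, because naturality of `η` writes any 2-cell
`θ : f ⟶ f'` as `η_f ≫ y ◁ θ^♯ ≫ η_{f'}⁻¹`, and the unit axiom says that `(η_f)^♯` is the
inverse of `κ_{y,f} ≫ κ_a ▷ f^♯ ≫ λ`. So a 2-cell into `y ≫ f^♯` is `η_f` as soon as its
extension is that inverse; this computes `η` at `p ≫ q^♯` (from the pentagon at `y, p, q`) and
at `y` (from the pentagon at `f, y, y`, after cancelling the invertible `y^♯ ≅ 𝟙`).
The compositor of `P` is the extension of `f ◁ η_{g ≫ y}` followed by `κ`; the whiskering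
axioms follow from naturality of `η` and `κ`, associativity from the pentagon and the formula
for `η` at `p ≫ q^♯`, the left unit axiom from the unit axiom and the right unit axiom from
the formula for `η` at `y`.
-/

namespace CategoryTheory.Bicategory

variable {B : Type*} [Bicategory B] {x y : B}

theorem whiskerRight_injective_of_iso_id {g h : x ⟶ y} {s : y ⟶ y} (e : s ≅ 𝟙 y)
    {φ ψ : g ⟶ h} (H : φ ▷ s = ψ ▷ s) : φ = ψ := by
  have conj : ∀ χ : g ⟶ h, (ρ_ g).inv ≫ g ◁ e.inv ≫ χ ▷ s ≫ h ◁ e.hom ≫ (ρ_ h).hom = χ := by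
    intro χ
    rw [whisker_exchange_assoc]
    simp
  rw [← conj φ, ← conj ψ, H]

theorem rightUnitor_inv_whiskerLeft_inv_whiskerRight_hom_leftUnitor {s : x ⟶ x}
    (e : s ≅ 𝟙 x) : (ρ_ s).inv ≫ s ◁ e.inv ≫ e.hom ▷ s ≫ (λ_ s).hom = 𝟙 s := by
  rw [whisker_exchange_assoc, ← rightUnitor_inv_naturality_assoc, leftUnitor_naturality,
    ← unitors_inv_equal]
  simp

end CategoryTheory.Bicategory

namespace KleisliStructure

variable {K : Type u} [Bicategory.{w, v} K] {J : Type u₂} {ι : J → K}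
  (S : KleisliStructure K J ι)

theorem eq_eta_hom_comp_whiskerLeft_sharp_map {a b : J} {f f' : ι a ⟶ S.P b} (θ : f ⟶ f') :
    θ = (S.eta f).hom ≫ S.y a ◁ S.sharp.map θ ≫ (S.eta f').inv := by
  rw [← reassoc_of% S.eta_natural θ]
  simp

instance faithful_sharp {a b : J} : (S.sharp : (ι a ⟶ S.P b) ⥤ _).Faithful where
  map_injective {_ _ θ θ'} h := by
    rw [S.eq_eta_hom_comp_whiskerLeft_sharp_map θ, S.eq_eta_hom_comp_whiskerLeft_sharp_map θ', h]

def sharpUnitIso {a b : J} (f : ι a ⟶ S.P b) :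
    S.sharp.obj (S.y a ≫ S.sharp.obj f) ≅ S.sharp.obj f :=
  S.kap (S.y a) f ≪≫ whiskerRightIso (S.kapId a) _ ≪≫ λ_ _

theorem sharp_map_eta_hom {a b : J} (f : ι a ⟶ S.P b) :
    S.sharp.map (S.eta f).hom = (S.sharpUnitIso f).inv := by
  rw [← Iso.comp_hom_eq_id]
  simpa [sharpUnitIso] using S.unit_coh f

theorem eta_hom_eq_of_sharp_map_comp {a b : J} {f : ι a ⟶ S.P b}
    {X : f ⟶ S.y a ≫ S.sharp.obj f} (h : S.sharp.map X ≫ (S.sharpUnitIso f).hom = 𝟙 _) :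
    (S.eta f).hom = X :=
  S.sharp.map_injective (by rw [S.sharp_map_eta_hom, ← (Iso.comp_hom_eq_id _).mp h])

theorem sharp_map_eta_hom_comp_kap_hom {a b : J} (f : ι a ⟶ S.P b) :
    S.sharp.map (S.eta f).hom ≫ (S.kap (S.y a) f).hom
      = (λ_ (S.sharp.obj f)).inv ≫ (S.kapId a).inv ▷ S.sharp.obj f := by
  simp [sharp_map_eta_hom, sharpUnitIso]

theorem eta_hom_comp_sharp {a b c : J} (p : ι a ⟶ S.P b) (q : ι b ⟶ S.P c) :
    (S.eta (p ≫ S.sharp.obj q)).hom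
      = (S.eta p).hom ▷ S.sharp.obj q ≫ (α_ (S.y a) (S.sharp.obj p) (S.sharp.obj q)).hom
        ≫ S.y a ◁ (S.kap p q).inv := by
  apply eta_hom_eq_of_sharp_map_comp
  have pentagon : S.sharp.map ((α_ (S.y a) (S.sharp.obj p) (S.sharp.obj q)).hom
        ≫ S.y a ◁ (S.kap p q).inv) ≫ (S.kap (S.y a) (p ≫ S.sharp.obj q)).hom
      = (S.kap (S.y a ≫ S.sharp.obj p) q).hom ≫ (S.kap (S.y a) p).hom ▷ S.sharp.obj q
        ≫ (α_ _ _ _).hom ≫ S.sharp.obj (S.y a) ◁ (S.kap p q).inv := by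
    rw [← Category.assoc, S.pentagon_coh (S.y a) p q]
    simp
  rw [sharpUnitIso, Iso.trans_hom, Iso.trans_hom, Functor.map_comp_assoc, reassoc_of% pentagon,
    reassoc_of% (S.kap_natural_left _ q), ← comp_whiskerRight_assoc,
    sharp_map_eta_hom_comp_kap_hom, whiskerRightIso_hom, whisker_exchange_assoc,
    leftUnitor_naturality]
  simp

theorem sharp_map_rightUnitor_inv_comp_kap_hom {a b : J} (f : ι a ⟶ S.P b) :
    S.sharp.map ((ρ_ f).inv ≫ f ◁ (S.kapId b).inv) ≫ (S.kap f (S.y b)).hom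
      = (ρ_ (S.sharp.obj f)).inv ≫ S.sharp.obj f ◁ (S.kapId b).inv := by
  refine whiskerRight_injective_of_iso_id (S.kapId b) ((cancel_epi (S.kap f (S.y b)).hom).mp ?_)
  have unit_whisker : ((ρ_ f).inv ≫ f ◁ (S.kapId b).inv) ▷ S.sharp.obj (S.y b)
        ≫ (α_ _ _ _).hom ≫ f ◁ (S.kap (S.y b) (S.y b)).inv
      = f ◁ S.sharp.map (S.eta (S.y b)).hom := by
    rw [sharp_map_eta_hom, sharpUnitIso]
    simp only [Iso.trans_inv, whiskerRightIso_inv]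
    bicategory
  calc (S.kap f (S.y b)).hom
        ≫ (S.sharp.map ((ρ_ f).inv ≫ f ◁ (S.kapId b).inv) ≫ (S.kap f (S.y b)).hom) ▷ _
      = S.sharp.map (((ρ_ f).inv ≫ f ◁ (S.kapId b).inv) ▷ S.sharp.obj (S.y b)
            ≫ (α_ _ _ _).hom ≫ f ◁ (S.kap (S.y b) (S.y b)).inv)
          ≫ (S.kap f (S.y b ≫ S.sharp.obj (S.y b))).hom
          ≫ S.sharp.obj f ◁ (S.kap (S.y b) (S.y b)).hom ≫ (α_ _ _ _).inv := by
        rw [comp_whiskerRight, ← reassoc_of% S.kap_natural_left, S.pentagon_coh]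
        simp only [Functor.map_comp, Category.assoc]
    _ = (S.kap f (S.y b)).hom ≫ S.sharp.obj f ◁ (S.sharp.map (S.eta (S.y b)).hom
          ≫ (S.kap (S.y b) (S.y b)).hom) ≫ (α_ _ _ _).inv := by
        rw [unit_whisker, reassoc_of% S.kap_natural_right, whiskerLeft_comp_assoc]
    _ = _ := by
        rw [sharp_map_eta_hom_comp_kap_hom]
        bicategory

theorem eta_hom_y (a : J) :
    (S.eta (S.y a)).hom = (ρ_ (S.y a)).inv ≫ S.y a ◁ (S.kapId a).inv := by
  apply eta_hom_eq_of_sharp_map_comp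
  rw [sharpUnitIso, Iso.trans_hom, Iso.trans_hom,
    reassoc_of% S.sharp_map_rightUnitor_inv_comp_kap_hom, whiskerRightIso_hom,
    rightUnitor_inv_whiskerLeft_inv_whiskerRight_hom_leftUnitor]

abbrev map {a b : J} (f : ι a ⟶ ι b) : S.P a ⟶ S.P b :=
  S.sharp.obj (f ≫ S.y b)

abbrev map₂ {a b : J} {f f' : ι a ⟶ ι b} (θ : f ⟶ f') : S.map f ⟶ S.map f' :=
  S.sharp.map (θ ▷ S.y b)

def mapId (a : J) : S.map (𝟙 (ι a)) ≅ 𝟙 (S.P a) :=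
  S.sharp.mapIso (λ_ (S.y a)) ≪≫ S.kapId a

def compIso {a b c : J} (f : ι a ⟶ ι b) (g : ι b ⟶ ι c) :
    (f ≫ g) ≫ S.y c ≅ (f ≫ S.y b) ≫ S.map g :=
  α_ f g (S.y c) ≪≫ whiskerLeftIso f (S.eta (g ≫ S.y c)) ≪≫ (α_ f (S.y b) (S.map g)).symm

theorem compIso_hom {a b c : J} (f : ι a ⟶ ι b) (g : ι b ⟶ ι c) :
    (S.compIso f g).hom
      = (α_ f g (S.y c)).hom ≫ f ◁ (S.eta (g ≫ S.y c)).hom ≫ (α_ f (S.y b) (S.map g)).inv :=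
  rfl

def mapComp {a b c : J} (f : ι a ⟶ ι b) (g : ι b ⟶ ι c) :
    S.map (f ≫ g) ≅ S.map f ≫ S.map g :=
  S.sharp.mapIso (S.compIso f g) ≪≫ S.kap (f ≫ S.y b) (g ≫ S.y c)

theorem mapComp_hom {a b c : J} (f : ι a ⟶ ι b) (g : ι b ⟶ ι c) :
    (S.mapComp f g).hom = S.sharp.map (S.compIso f g).hom ≫ (S.kap (f ≫ S.y b) (g ≫ S.y c)).hom :=
  rfl

theorem map₂_id {a b : J} (f : ι a ⟶ ι b) : S.map₂ (𝟙 f) = 𝟙 (S.map f) := by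
  simp [map₂, map]

theorem map₂_comp {a b : J} {f g h : ι a ⟶ ι b} (θ : f ⟶ g) (δ : g ⟶ h) :
    S.map₂ (θ ≫ δ) = S.map₂ θ ≫ S.map₂ δ := by
  simp [map₂]

theorem compIso_hom_naturality_right {a b c : J} (f : ι a ⟶ ι b) {g h : ι b ⟶ ι c}
    (θ : g ⟶ h) :
    (f ◁ θ) ▷ S.y c ≫ (S.compIso f h).hom = (S.compIso f g).hom ≫ (f ≫ S.y b) ◁ S.map₂ θ := by
  rw [compIso_hom, compIso_hom, associator_naturality_middle_assoc, ← whiskerLeft_comp_assoc,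
    S.eta_natural, whiskerLeft_comp_assoc, associator_inv_naturality_right]
  simp only [Category.assoc]

theorem compIso_hom_naturality_left {a b c : J} {f g : ι a ⟶ ι b} (θ : f ⟶ g)
    (h : ι b ⟶ ι c) :
    (θ ▷ h) ▷ S.y c ≫ (S.compIso g h).hom = (S.compIso f h).hom ≫ (θ ▷ S.y b) ▷ S.map h := by
  rw [compIso_hom, compIso_hom, associator_naturality_left_assoc, ← whisker_exchange_assoc]
  simp

theorem map₂_whisker_left {a b c : J} (f : ι a ⟶ ι b) {g h : ι b ⟶ ι c} (θ : g ⟶ h) :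
    S.map₂ (f ◁ θ) = (S.mapComp f g).hom ≫ S.map f ◁ S.map₂ θ ≫ (S.mapComp f h).inv := by
  rw [← cancel_mono (S.mapComp f h).hom, Category.assoc, Category.assoc, Iso.inv_hom_id,
    Category.comp_id, mapComp_hom, mapComp_hom, map₂, ← Functor.map_comp_assoc,
    compIso_hom_naturality_right, Functor.map_comp_assoc, map₂, S.kap_natural_right]
  simp only [Category.assoc]

theorem map₂_whisker_right {a b c : J} {f g : ι a ⟶ ι b} (θ : f ⟶ g) (h : ι b ⟶ ι c) :
    S.map₂ (θ ▷ h) = (S.mapComp f h).hom ≫ S.map₂ θ ▷ S.map h ≫ (S.mapComp g h).inv := by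
  rw [← cancel_mono (S.mapComp g h).hom, Category.assoc, Category.assoc, Iso.inv_hom_id,
    Category.comp_id, mapComp_hom, mapComp_hom, map₂, ← Functor.map_comp_assoc,
    compIso_hom_naturality_left, Functor.map_comp_assoc, S.kap_natural_left]
  simp only [Category.assoc]

theorem compIso_associativity {a b c d : J} (f : ι a ⟶ ι b) (g : ι b ⟶ ι c) (h : ι c ⟶ ι d) :
    (α_ f g h).hom ▷ S.y d ≫ (S.compIso f (g ≫ h)).hom
        ≫ (f ≫ S.y b) ◁ S.sharp.map (S.compIso g h).hom
      = (S.compIso (f ≫ g) h).hom ≫ (S.compIso f g).hom ▷ S.map h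
        ≫ (α_ (f ≫ S.y b) (S.map g) (S.map h)).hom
        ≫ (f ≫ S.y b) ◁ (S.kap (g ≫ S.y c) (h ≫ S.y d)).inv := by
  have eta_compIso : (S.eta ((g ≫ h) ≫ S.y d)).hom ≫ S.y b ◁ S.sharp.map (S.compIso g h).hom
      = (S.compIso g h).hom ≫ (S.eta (g ≫ S.y c)).hom ▷ S.map h ≫ (α_ _ _ _).hom
        ≫ S.y b ◁ (S.kap (g ≫ S.y c) (h ≫ S.y d)).inv := by
    rw [← S.eta_natural, eta_hom_comp_sharp]
  calc _ = (α_ f g h).hom ▷ S.y d ≫ (α_ f (g ≫ h) (S.y d)).hom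
        ≫ f ◁ ((S.eta ((g ≫ h) ≫ S.y d)).hom ≫ S.y b ◁ S.sharp.map (S.compIso g h).hom)
        ≫ (α_ f (S.y b) _).inv := by
        rw [S.compIso_hom f (g ≫ h)]
        bicategory
    _ = _ := by
        rw [eta_compIso, compIso_hom, compIso_hom, compIso_hom]
        bicategory

theorem map₂_associator {a b c d : J} (f : ι a ⟶ ι b) (g : ι b ⟶ ι c) (h : ι c ⟶ ι d) :
    S.map₂ (α_ f g h).hom
      = (S.mapComp (f ≫ g) h).hom ≫ (S.mapComp f g).hom ▷ S.map h
        ≫ (α_ (S.map f) (S.map g) (S.map h)).hom ≫ S.map f ◁ (S.mapComp g h).inv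
        ≫ (S.mapComp f (g ≫ h)).inv := by
  suffices H : S.map₂ (α_ f g h).hom ≫ (S.mapComp f (g ≫ h)).hom
      ≫ S.map f ◁ (S.mapComp g h).hom
      = (S.mapComp (f ≫ g) h).hom ≫ (S.mapComp f g).hom ▷ S.map h
        ≫ (α_ (S.map f) (S.map g) (S.map h)).hom by
    rw [← reassoc_of% H]
    simp
  have pentagon : (S.kap ((f ≫ S.y b) ≫ S.map g) (h ≫ S.y d)).hom
        ≫ (S.kap (f ≫ S.y b) (g ≫ S.y c)).hom ▷ S.map h ≫ (α_ _ _ _).hom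
      = S.sharp.map ((α_ _ _ _).hom ≫ (f ≫ S.y b) ◁ (S.kap (g ≫ S.y c) (h ≫ S.y d)).inv)
        ≫ (S.kap (f ≫ S.y b) ((g ≫ S.y c) ≫ S.map h)).hom
        ≫ S.map f ◁ (S.kap (g ≫ S.y c) (h ≫ S.y d)).hom := by
    rw [reassoc_of% S.pentagon_coh]
    simp
  calc _ = S.sharp.map ((α_ f g h).hom ▷ S.y d ≫ (S.compIso f (g ≫ h)).hom
          ≫ (f ≫ S.y b) ◁ S.sharp.map (S.compIso g h).hom)
        ≫ (S.kap (f ≫ S.y b) ((g ≫ S.y c) ≫ S.map h)).hom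
        ≫ S.map f ◁ (S.kap (g ≫ S.y c) (h ≫ S.y d)).hom := by
        simp only [mapComp_hom, map, map₂, whiskerLeft_comp, Category.assoc]
        rw [← reassoc_of% S.kap_natural_right]
        simp only [Functor.map_comp, Category.assoc]
    _ = _ := by
        simp only [compIso_associativity, mapComp_hom, map, comp_whiskerRight, Category.assoc]
        rw [← reassoc_of% S.kap_natural_left, pentagon]
        simp only [Functor.map_comp, Category.assoc]

theorem map₂_left_unitor {a b : J} (f : ι a ⟶ ι b) :
    S.map₂ (λ_ f).hom
      = (S.mapComp (𝟙 (ι a)) f).hom ≫ (S.mapId a).hom ▷ S.map f ≫ (λ_ (S.map f)).hom := by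
  have compIso_leftUnitor : (S.compIso (𝟙 (ι a)) f).hom ≫ (λ_ (S.y a)).hom ▷ S.map f
      = (λ_ f).hom ▷ S.y b ≫ (S.eta (f ≫ S.y b)).hom := by
    rw [compIso_hom]
    bicategory
  simp only [mapComp_hom, mapId, Iso.trans_hom, Functor.mapIso_hom, map, comp_whiskerRight,
    Category.assoc]
  rw [← reassoc_of% S.kap_natural_left, ← Functor.map_comp_assoc, compIso_leftUnitor,
    Functor.map_comp_assoc, S.unit_coh, Category.comp_id]

theorem map₂_right_unitor {a b : J} (f : ι a ⟶ ι b) :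
    S.map₂ (ρ_ f).hom
      = (S.mapComp f (𝟙 (ι b))).hom ≫ S.map f ◁ (S.mapId b).hom ≫ (ρ_ (S.map f)).hom := by
  have compIso_rightUnitor : (S.compIso f (𝟙 (ι b))).hom
        ≫ (f ≫ S.y b) ◁ S.sharp.map (λ_ (S.y b)).hom
      = (ρ_ f).hom ▷ S.y b ≫ (ρ_ (f ≫ S.y b)).inv ≫ (f ≫ S.y b) ◁ (S.kapId b).inv := by
    calc _ = (α_ f (𝟙 (ι b)) (S.y b)).hom
          ≫ f ◁ ((S.eta (𝟙 (ι b) ≫ S.y b)).hom ≫ S.y b ◁ S.sharp.map (λ_ (S.y b)).hom)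
          ≫ (α_ f (S.y b) (S.sharp.obj (S.y b))).inv := by
          rw [compIso_hom]
          bicategory
      _ = _ := by
          rw [← S.eta_natural, eta_hom_y]
          bicategory
  simp only [mapComp_hom, mapId, Iso.trans_hom, Functor.mapIso_hom, map, whiskerLeft_comp,
    Category.assoc]
  rw [← reassoc_of% S.kap_natural_right, ← Functor.map_comp_assoc, compIso_rightUnitor,
    Functor.map_comp_assoc, reassoc_of% S.sharp_map_rightUnitor_inv_comp_kap_hom]
  simp

end KleisliStructure

/-- A Kleisli structure `P` on a full sub-bicategory `ι : J → K` underlies a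
pseudofunctor: setting `P f := (f ≫ y b)^♯` on 1-cells and `P θ := (θ ▷ y b)^♯` on
2-cells, the canonical invertible 2-cells `P (𝟙 a) ≅ 𝟙 (P a)` and
`P (f ≫ g) ≅ P f ≫ P g`, built from `κ_a`, `κ_{g,f}` and `η`, satisfy the coherence
axioms of a pseudofunctor. -/
theorem kleisli_structure_gives_pseudofunctor {K : Type u} [Bicategory.{w, v} K]
    {J : Type u₂} {ι : J → K} (S : KleisliStructure K J ι) :
    -- the action on 1-cells and 2-cells
    let Pmap : ∀ {a b : J}, (ι a ⟶ ι b) → (S.P a ⟶ S.P b) :=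
      fun {a b} f => S.sharp.obj (f ≫ S.y b)
    let Pmap₂ : ∀ {a b : J} {f f' : ι a ⟶ ι b}, (f ⟶ f') → (Pmap f ⟶ Pmap f') :=
      fun {a b f f'} θ => S.sharp.map (θ ▷ S.y b)
    -- the structural invertible 2-cells
    let PmapId : ∀ a : J, Pmap (𝟙 (ι a)) ≅ 𝟙 (S.P a) :=
      fun a => S.sharp.mapIso (λ_ (S.y a)) ≪≫ S.kapId a
    let PmapComp : ∀ {a b c : J} (f : ι a ⟶ ι b) (g : ι b ⟶ ι c),
        Pmap (f ≫ g) ≅ Pmap f ≫ Pmap g :=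
      fun {a b c} f g =>
        S.sharp.mapIso ((α_ f g (S.y c)) ≪≫ whiskerLeftIso f (S.eta (g ≫ S.y c)) ≪≫
          (α_ f (S.y b) (S.sharp.obj (g ≫ S.y c))).symm) ≪≫ S.kap (f ≫ S.y b) (g ≫ S.y c)
    -- functoriality of the action on 2-cells
    (∀ {a b : J} (f : ι a ⟶ ι b), Pmap₂ (𝟙 f) = 𝟙 (Pmap f)) ∧
    (∀ {a b : J} {f g h : ι a ⟶ ι b} (θ : f ⟶ g) (δ : g ⟶ h),
      Pmap₂ (θ ≫ δ) = Pmap₂ θ ≫ Pmap₂ δ) ∧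
    -- compatibility with whiskering
    (∀ {a b c : J} (f : ι a ⟶ ι b) {g h : ι b ⟶ ι c} (θ : g ⟶ h),
      Pmap₂ (f ◁ θ)
        = (PmapComp f g).hom ≫ Pmap f ◁ Pmap₂ θ ≫ (PmapComp f h).inv) ∧
    (∀ {a b c : J} {f g : ι a ⟶ ι b} (θ : f ⟶ g) (h : ι b ⟶ ι c),
      Pmap₂ (θ ▷ h)
        = (PmapComp f h).hom ≫ Pmap₂ θ ▷ Pmap h ≫ (PmapComp g h).inv) ∧
    -- associativity coherence
    (∀ {a b c d : J} (f : ι a ⟶ ι b) (g : ι b ⟶ ι c) (h : ι c ⟶ ι d),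
      Pmap₂ (α_ f g h).hom
        = (PmapComp (f ≫ g) h).hom ≫ (PmapComp f g).hom ▷ Pmap h ≫
            (α_ (Pmap f) (Pmap g) (Pmap h)).hom ≫ Pmap f ◁ (PmapComp g h).inv ≫
            (PmapComp f (g ≫ h)).inv) ∧
    -- unit coherences
    (∀ {a b : J} (f : ι a ⟶ ι b),
      Pmap₂ (λ_ f).hom
        = (PmapComp (𝟙 (ι a)) f).hom ≫ (PmapId a).hom ▷ Pmap f ≫ (λ_ (Pmap f)).hom) ∧
    (∀ {a b : J} (f : ι a ⟶ ι b),
      Pmap₂ (ρ_ f).hom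
        = (PmapComp f (𝟙 (ι b))).hom ≫ Pmap f ◁ (PmapId b).hom ≫ (ρ_ (Pmap f)).hom) := by
  intro Pmap Pmap₂ PmapId PmapComp
  exact ⟨S.map₂_id, S.map₂_comp, S.map₂_whisker_left, S.map₂_whisker_right, S.map₂_associator,
    S.map₂_left_unitor, S.map₂_right_unitor⟩
end

section
/- Given monads P and S on a category C with a distributive law λ : S P ⟶ P S, the monad S lifts/extends to a monad S_P on the Kleisli category of P: S_P acts on objects as S, and sends a Kleisli morphism f : c → P d to λ_d ∘ S f : S c → P S d; this defines a functor on Kl(P) and the unit and multiplication of S induce a monad structure on S_P. Moreover, the Kleisli category of the composite monad P S on C is isomorphic to the Kleisli category of the monad S_P on Kl(P). -/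
/-!
A Kleisli morphism of the form `k ≫ η^P` is just the morphism `k` of `C`, and postcomposing
with `η^P` commutes with both the Kleisli composition and the extension `S_P`
(the latter by the unit law `S η^P ≫ λ = η^P S`). Since the unit and multiplication of `S_P`
are of this form, every monad law for `S_P` reduces to the corresponding law for `S`,
naturality of `η^S` and `μ^S` against `S_P` reduces to the two `S`-axioms of the
distributive law, and functoriality of `S_P` is the `μ^P`-axiom together with naturality
of `λ`. The composite Kleisli composition is then a rearrangement using naturality of `μ^P`.
-/

open CategoryTheory

section KleisliExtension

variable {C : Type*} [Category C]

def kleisliComp (P : Monad C) {c d e : C} (f : c ⟶ P.obj d) (g : d ⟶ P.obj e) :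
    c ⟶ P.obj e :=
  f ≫ P.map g ≫ P.μ.app e

def kleisliLift {P S : Monad C} (lam : (P : C ⥤ C) ⋙ (S : C ⥤ C) ⟶ (S : C ⥤ C) ⋙ (P : C ⥤ C))
    {c d : C} (f : c ⟶ P.obj d) : S.obj c ⟶ P.obj (S.obj d) :=
  S.map f ≫ lam.app d

variable (P : Monad C)

theorem kleisliComp_comp_η_left {b c d : C} (k : b ⟶ c) (g : c ⟶ P.obj d) :
    kleisliComp P (k ≫ P.η.app c) g = k ≫ g := by
  have hη := P.η.naturality g
  simp only [Functor.id_map, Functor.id_obj] at hη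
  rw [kleisliComp, Category.assoc, ← reassoc_of% hη]
  simp

theorem kleisliComp_comp_η_right {b c d : C} (f : b ⟶ P.obj c) (k : c ⟶ d) :
    kleisliComp P f (k ≫ P.η.app d) = f ≫ P.map k := by
  simp [kleisliComp]

theorem kleisliComp_comp_map {b c d e : C} (f : b ⟶ P.obj c) (g : c ⟶ P.obj d) (k : d ⟶ e) :
    kleisliComp P f (g ≫ P.map k) = kleisliComp P f g ≫ P.map k := by
  have hμ := P.μ.naturality k
  simp only [Functor.comp_map, Functor.comp_obj] at hμ
  simp [kleisliComp, hμ]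

variable {P} {S : Monad C} (lam : (P : C ⥤ C) ⋙ (S : C ⥤ C) ⟶ (S : C ⥤ C) ⋙ (P : C ⥤ C))

theorem kleisliLift_comp_η
    (unit_P : ∀ x : C, S.map (P.η.app x) ≫ lam.app x = P.η.app (S.obj x)) {c d : C}
    (k : c ⟶ d) : kleisliLift lam (k ≫ P.η.app d) = S.map k ≫ P.η.app (S.obj d) := by
  simp [kleisliLift, unit_P]

theorem kleisliLift_kleisliComp
    (mul_P : ∀ x : C, S.map (P.μ.app x) ≫ lam.app x =
      lam.app (P.obj x) ≫ P.map (lam.app x) ≫ P.μ.app (S.obj x))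
    {c d e : C} (f : c ⟶ P.obj d) (g : d ⟶ P.obj e) :
    kleisliLift lam (kleisliComp P f g) =
      kleisliComp P (kleisliLift lam f) (kleisliLift lam g) := by
  have hlam := lam.naturality g
  simp only [Functor.comp_map] at hlam
  simp [kleisliLift, kleisliComp, mul_P, reassoc_of% hlam]

theorem kleisliComp_η_kleisliLift
    (unit_S : ∀ x : C, S.η.app (P.obj x) ≫ lam.app x = P.map (S.η.app x))
    {c d : C} (f : c ⟶ P.obj d) :
    kleisliComp P (S.η.app c ≫ P.η.app (S.obj c)) (kleisliLift lam f) =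
      kleisliComp P f (S.η.app d ≫ P.η.app (S.obj d)) := by
  have hη := S.η.naturality f
  simp only [Functor.id_map, Functor.id_obj] at hη
  rw [kleisliComp_comp_η_left, kleisliComp_comp_η_right, kleisliLift, ← reassoc_of% hη, unit_S]

theorem kleisliComp_μ_kleisliLift
    (mul_S : ∀ x : C, S.μ.app (P.obj x) ≫ lam.app x =
      S.map (lam.app x) ≫ lam.app (S.obj x) ≫ P.map (S.μ.app x))
    {c d : C} (f : c ⟶ P.obj d) :
    kleisliComp P (S.μ.app c ≫ P.η.app (S.obj c)) (kleisliLift lam f) =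
      kleisliComp P (kleisliLift lam (kleisliLift lam f)) (S.μ.app d ≫ P.η.app (S.obj d)) := by
  have hμ := S.μ.naturality f
  simp only [Functor.comp_map, Functor.comp_obj] at hμ
  rw [kleisliComp_comp_η_left, kleisliComp_comp_η_right, kleisliLift, ← reassoc_of% hμ, mul_S]
  simp [kleisliLift]

theorem kleisliComp_η_μ (c : C) :
    kleisliComp P (S.η.app (S.obj c) ≫ P.η.app _) (S.μ.app c ≫ P.η.app _) =
      P.η.app (S.obj c) := by
  simp [kleisliComp_comp_η_left]

theorem kleisliComp_kleisliLift_η_μ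
    (unit_P : ∀ x : C, S.map (P.η.app x) ≫ lam.app x = P.η.app (S.obj x)) (c : C) :
    kleisliComp P (kleisliLift lam (S.η.app c ≫ P.η.app _)) (S.μ.app c ≫ P.η.app _) =
      P.η.app (S.obj c) := by
  simp [kleisliLift_comp_η lam unit_P, kleisliComp_comp_η_left]

theorem kleisliComp_kleisliLift_μ_μ
    (unit_P : ∀ x : C, S.map (P.η.app x) ≫ lam.app x = P.η.app (S.obj x)) (c : C) :
    kleisliComp P (kleisliLift lam (S.μ.app c ≫ P.η.app _)) (S.μ.app c ≫ P.η.app _) =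
      kleisliComp P (S.μ.app (S.obj c) ≫ P.η.app _) (S.μ.app c ≫ P.η.app _) := by
  simp [kleisliLift_comp_η lam unit_P, kleisliComp_comp_η_left, reassoc_of% (S.assoc c)]

def compositeKleisliComp {c d e : C} (f : c ⟶ P.obj (S.obj d)) (g : d ⟶ P.obj (S.obj e)) :
    c ⟶ P.obj (S.obj e) :=
  f ≫ P.map (S.map g) ≫
    (P.map (lam.app (S.obj e)) ≫ P.μ.app (S.obj (S.obj e)) ≫ P.map (S.μ.app e))

theorem compositeKleisliComp_eq_kleisliComp {c d e : C} (f : c ⟶ P.obj (S.obj d))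
    (g : d ⟶ P.obj (S.obj e)) :
    compositeKleisliComp lam f g =
      kleisliComp P f (kleisliComp P (kleisliLift lam g) (S.μ.app e ≫ P.η.app _)) := by
  rw [kleisliComp_comp_η_right, kleisliComp_comp_map]
  simp [compositeKleisliComp, kleisliComp, kleisliLift]

end KleisliExtension

/-- Given monads `P` and `S` on `C` with a distributive law `lam : S P ⟶ P S`, the monad
`S` extends to a monad `S_P` on the Kleisli category of `P` (whose objects are those of
`C` and whose morphisms `c ⟶ d` are morphisms `c ⟶ P d` of `C`, with composition
`g · f = μ^P ∘ P g ∘ f`): on objects `S_P` acts as `S` and it sends a Kleisli morphism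
`f : c ⟶ P d` to `lam_d ∘ S f : S c ⟶ P (S d)`; this is a functor on `Kl(P)`, the unit
and multiplication of `S` induce a monad structure on it, and the Kleisli category of the
composite monad `P S` is isomorphic to the Kleisli category of `S_P` (same objects and
hom-sets, and the two compositions agree). -/
theorem distributive_law_extends_monad_to_kleisli {C : Type u} [Category.{v} C]
    (P S : Monad C)
    (lam : (P : C ⥤ C) ⋙ (S : C ⥤ C) ⟶ (S : C ⥤ C) ⋙ (P : C ⥤ C))
    (unit_P : ∀ x : C, S.map (P.η.app x) ≫ lam.app x = P.η.app (S.obj x))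
    (unit_S : ∀ x : C, S.η.app (P.obj x) ≫ lam.app x = P.map (S.η.app x))
    (mul_P : ∀ x : C, S.map (P.μ.app x) ≫ lam.app x =
      lam.app (P.obj x) ≫ P.map (lam.app x) ≫ P.μ.app (S.obj x))
    (mul_S : ∀ x : C, S.μ.app (P.obj x) ≫ lam.app x =
      S.map (lam.app x) ≫ lam.app (S.obj x) ≫ P.map (S.μ.app x)) :
    -- composition in the Kleisli category of `P`
    let kcomp : ∀ {c d e : C}, (c ⟶ P.obj d) → (d ⟶ P.obj e) → (c ⟶ P.obj e) :=
      fun f g => f ≫ P.map g ≫ P.μ.app _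
    -- the extension `S_P` on Kleisli morphisms
    let SPmap : ∀ {c d : C}, (c ⟶ P.obj d) → (S.obj c ⟶ P.obj (S.obj d)) :=
      fun {_ d} f => S.map f ≫ lam.app d
    -- the unit and multiplication of `S_P`, induced by those of `S`
    let ηSP : ∀ c : C, c ⟶ P.obj (S.obj c) := fun c => S.η.app c ≫ P.η.app (S.obj c)
    let μSP : ∀ c : C, S.obj (S.obj c) ⟶ P.obj (S.obj c) :=
      fun c => S.μ.app c ≫ P.η.app (S.obj c)
    -- (a) `S_P` is a functor on the Kleisli category of `P`
    (∀ c : C, SPmap (P.η.app c) = P.η.app (S.obj c)) ∧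
    (∀ (c d e : C) (f : c ⟶ P.obj d) (g : d ⟶ P.obj e),
      SPmap (kcomp f g) = kcomp (SPmap f) (SPmap g)) ∧
    -- (b) the unit and multiplication of `S_P` are natural in `Kl(P)` and satisfy the
    -- monad laws there
    (∀ (c d : C) (f : c ⟶ P.obj d), kcomp f (ηSP d) = kcomp (ηSP c) (SPmap f)) ∧
    (∀ (c d : C) (f : c ⟶ P.obj d),
      kcomp (SPmap (SPmap f)) (μSP d) = kcomp (μSP c) (SPmap f)) ∧
    (∀ c : C, kcomp (ηSP (S.obj c)) (μSP c) = P.η.app (S.obj c)) ∧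
    (∀ c : C, kcomp (SPmap (ηSP c)) (μSP c) = P.η.app (S.obj c)) ∧
    (∀ c : C, kcomp (SPmap (μSP c)) (μSP c) = kcomp (μSP (S.obj c)) (μSP c)) ∧
    -- (c) the Kleisli category of the composite monad `P S` is isomorphic to the Kleisli
    -- category of `S_P`: both have objects those of `C` and hom-sets `c ⟶ P (S d)`, the
    -- identities agree, and the composite-monad Kleisli composition equals the
    -- `S_P`-Kleisli composition computed in `Kl(P)`
    (∀ c : C, ηSP c = S.η.app c ≫ P.η.app (S.obj c)) ∧
    (∀ (c d e : C) (f : c ⟶ P.obj (S.obj d)) (g : d ⟶ P.obj (S.obj e)),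
      f ≫ P.map (S.map g) ≫
          (P.map (lam.app (S.obj e)) ≫ P.μ.app (S.obj (S.obj e)) ≫ P.map (S.μ.app e))
        = kcomp f (kcomp (SPmap g) (μSP e))) := by
  exact ⟨unit_P, fun _ _ _ => kleisliLift_kleisliComp lam mul_P,
    fun _ _ f => (kleisliComp_η_kleisliLift lam unit_S f).symm,
    fun _ _ f => (kleisliComp_μ_kleisliLift lam mul_S f).symm,
    kleisliComp_η_μ, kleisliComp_kleisliLift_η_μ lam unit_P,
    kleisliComp_kleisliLift_μ_μ lam unit_P, fun _ => rfl,
    fun _ _ _ => compositeKleisliComp_eq_kleisliComp lam⟩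
end

section
/- Every profunctor M : Aᵒᵖ × B ⥤ Type between small categories factors through its category of elements: letting E(M) be the category of elements of M (objects are triples (a, b, m) with m ∈ M(a, b)) with projections p : E(M) ⥤ B and q : E(M) ⥤ A, there is an isomorphism of profunctors M ≅ q_* ∘ p^*, where p^* and q_* are the representable profunctors associated with p and q and ∘ is profunctor composition by coends. -/
/-!
The inverse isomorphism is evaluation: a class `[e, n, m]` of the coend
`∫^e A(a, q e) × B(p e, b)` goes to `M(n, m)(e.m)`, which is well defined because the morphisms
of `E(M)` are exactly the pairs of maps along which elements of `M` agree. Evaluation is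
bijective because every class `[e, n, m]` equals `[(a, b, M(n, m)(e.m)), 𝟙, 𝟙]`: restricting `e`
along `n` and then extending along `m` is a zigzag in `E(M)` joining the two representatives.
-/

open CategoryTheory Opposite

universe u

abbrev Prof (A B : Type u) [SmallCategory A] [SmallCategory B] :=
  Bᵒᵖ × A ⥤ Type u

namespace Prof

variable {A B C D : Type u} [SmallCategory A] [SmallCategory B] [SmallCategory C]
  [SmallCategory D]

structure Pt (M : Prof A B) (N : Prof B C) (p : Cᵒᵖ × A) : Type u where
  mid : B
  n : N.obj (p.1, mid)
  m : M.obj (op mid, p.2)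

inductive CRel (M : Prof A B) (N : Prof B C) (p : Cᵒᵖ × A) :
    Pt M N p → Pt M N p → Prop
  | mk {b b' : B} (f : b ⟶ b') (n : N.obj (p.1, b)) (m : M.obj (op b', p.2)) :
      CRel M N p ⟨b', N.map (𝟙 p.1, f) n, m⟩ ⟨b, n, M.map (f.op, 𝟙 p.2) m⟩

def comp (M : Prof A B) (N : Prof B C) : Prof A C where
  obj p := Quot (CRel M N p)
  map {p q} g := TypeCat.ofHom <|
    Quot.lift
      (fun x => Quot.mk _ ⟨x.mid, N.map (g.1, 𝟙 x.mid) x.n, M.map (𝟙 (op x.mid), g.2) x.m⟩)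
      (by
        rintro x y h
        cases h with
        | @mk b b' f n m =>
          have e1 : N.map ((g.1, 𝟙 b') : (p.1, b') ⟶ (q.1, b')) (N.map (𝟙 p.1, f) n)
              = N.map ((𝟙 q.1, f) : (q.1, b) ⟶ (q.1, b')) (N.map (g.1, 𝟙 b) n) := by
            rw [← FunctorToTypes.map_comp_apply, ← FunctorToTypes.map_comp_apply,
              prod_comp, prod_comp]
            simp only [Category.id_comp, Category.comp_id]
          have e2 : M.map ((f.op, 𝟙 q.2) : (op b', q.2) ⟶ (op b, q.2))
                (M.map (𝟙 (op b'), g.2) m)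
              = M.map ((𝟙 (op b), g.2) : (op b, p.2) ⟶ (op b, q.2))
                (M.map (f.op, 𝟙 p.2) m) := by
            rw [← FunctorToTypes.map_comp_apply, ← FunctorToTypes.map_comp_apply,
              prod_comp, prod_comp]
            simp only [Category.id_comp, Category.comp_id]
          dsimp only
          rw [e1, ← e2]
          exact Quot.sound (CRel.mk f _ _))
  map_id p := by
    ext x
    induction x using Quot.ind with
    | _ x =>
      show Quot.mk (CRel M N p)
          ⟨x.mid, N.map (𝟙 (p.1, x.mid)) x.n, M.map (𝟙 (op x.mid, p.2)) x.m⟩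
        = Quot.mk (CRel M N p) x
      rw [FunctorToTypes.map_id_apply, FunctorToTypes.map_id_apply]
  map_comp {p q r} g h := by
    ext x
    induction x using Quot.ind with
    | _ x =>
      show Quot.mk (CRel M N r)
          ⟨x.mid, N.map ((g ≫ h).1, 𝟙 x.mid) x.n, M.map (𝟙 (op x.mid), (g ≫ h).2) x.m⟩
        = Quot.mk (CRel M N r)
          ⟨x.mid, N.map ((h.1, 𝟙 x.mid) : (q.1, x.mid) ⟶ (r.1, x.mid))
              (N.map ((g.1, 𝟙 x.mid) : (p.1, x.mid) ⟶ (q.1, x.mid)) x.n),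
            M.map ((𝟙 (op x.mid), h.2) : (op x.mid, q.2) ⟶ (op x.mid, r.2))
              (M.map ((𝟙 (op x.mid), g.2) : (op x.mid, p.2) ⟶ (op x.mid, q.2)) x.m)⟩
      rw [← FunctorToTypes.map_comp_apply, ← FunctorToTypes.map_comp_apply,
        prod_comp, prod_comp, prod_comp]
      simp only [Category.id_comp, Category.comp_id]

@[simps]
def idP (A : Type u) [SmallCategory A] : Prof A A where
  obj p := p.1.unop ⟶ p.2
  map g := TypeCat.ofHom fun h => g.1.unop ≫ h ≫ g.2
  map_id p := by ext h; simp
  map_comp g h := by ext k; simp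

/-- Left whiskering: act on the first factor of a composite. -/
def whiskL {M M' : Prof A B} (θ : M ⟶ M') (N : Prof B C) : comp M N ⟶ comp M' N where
  app p := TypeCat.ofHom <|
    Quot.lift (fun x => Quot.mk _ ⟨x.mid, x.n, θ.app (op x.mid, p.2) x.m⟩)
      (by
        rintro x y h
        cases h with
        | @mk b b' f n m =>
          dsimp only
          rw [FunctorToTypes.naturality]
          exact Quot.sound (CRel.mk f _ _))
  naturality p q g := by
    ext x
    induction x using Quot.ind with
    | _ x =>
      show Quot.mk (CRel M' N q)
          ⟨x.mid, N.map (g.1, 𝟙 x.mid) x.n, θ.app (op x.mid, q.2) (M.map (𝟙 (op x.mid), g.2) x.m)⟩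
        = Quot.mk (CRel M' N q)
          ⟨x.mid, N.map (g.1, 𝟙 x.mid) x.n, M'.map (𝟙 (op x.mid), g.2) (θ.app (op x.mid, p.2) x.m)⟩
      rw [FunctorToTypes.naturality]

/-- Right whiskering: act on the second factor of a composite. -/
def whiskR (M : Prof A B) {N N' : Prof B C} (δ : N ⟶ N') : comp M N ⟶ comp M N' where
  app p := TypeCat.ofHom <|
    Quot.lift (fun x => Quot.mk _ ⟨x.mid, δ.app (p.1, x.mid) x.n, x.m⟩)
      (by
        rintro x y h
        cases h with
        | @mk b b' f n m =>
          dsimp only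
          rw [FunctorToTypes.naturality]
          exact Quot.sound (CRel.mk f _ _))
  naturality p q g := by
    ext x
    induction x using Quot.ind with
    | _ x =>
      show Quot.mk (CRel M N' q)
          ⟨x.mid, δ.app (q.1, x.mid) (N.map (g.1, 𝟙 x.mid) x.n), M.map (𝟙 (op x.mid), g.2) x.m⟩
        = Quot.mk (CRel M N' q)
          ⟨x.mid, N'.map (g.1, 𝟙 x.mid) (δ.app (p.1, x.mid) x.n), M.map (𝟙 (op x.mid), g.2) x.m⟩
      rw [FunctorToTypes.naturality]

theorem mapmap (M : Prof A B) {P Q R : Bᵒᵖ × A} (w : P ⟶ Q) (w' : Q ⟶ R)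
    (z : M.obj P) :
    M.map w' (M.map w z) = M.map ((w.1 ≫ w'.1, w.2 ≫ w'.2) : P ⟶ R) z := by
  rw [← FunctorToTypes.map_comp_apply]
  rfl

theorem mapid (M : Prof A B) {x : Bᵒᵖ} {a : A} (z : M.obj (x, a)) :
    M.map ((𝟙 x, 𝟙 a) : (x, a) ⟶ (x, a)) z = z := by
  have : ((𝟙 x, 𝟙 a) : (x, a) ⟶ (x, a)) = 𝟙 ((x, a) : Bᵒᵖ × A) := rfl
  rw [this, FunctorToTypes.map_id_apply]

/-- Left unit collapse `id_A ⋙ M ⟶ M`. -/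
def lcol (M : Prof A B) : comp (idP A) M ⟶ M where
  app p := TypeCat.ofHom <|
    Quot.lift
      (fun x => M.map ((𝟙 p.1, x.m) : (p.1, x.mid) ⟶ (p.1, p.2)) x.n)
      (by
        rintro x y h
        cases h with
        | @mk b b' f n m =>
          show M.map ((𝟙 p.1, m) : (p.1, b') ⟶ (p.1, p.2))
              (M.map ((𝟙 p.1, f) : (p.1, b) ⟶ (p.1, b')) n)
            = M.map ((𝟙 p.1, (idP A).map ((f.op, 𝟙 p.2) : (op b', p.2) ⟶ (op b, p.2)) m) :
                (p.1, b) ⟶ (p.1, p.2)) n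
          rw [mapmap]
          dsimp only [idP_map]
          simp <;> rfl)
  naturality p q g := by
    ext x
    induction x using Quot.ind with
    | _ x =>
      show M.map ((𝟙 q.1, (idP A).map ((𝟙 (op x.mid), g.2) : (op x.mid, p.2) ⟶ (op x.mid, q.2)) x.m) :
            (q.1, x.mid) ⟶ (q.1, q.2))
          (M.map ((g.1, 𝟙 x.mid) : (p.1, x.mid) ⟶ (q.1, x.mid)) x.n)
        = M.map g (M.map ((𝟙 p.1, x.m) : (p.1, x.mid) ⟶ (p.1, p.2)) x.n)
      rw [mapmap, mapmap]
      dsimp only [idP_map]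
      simp only [Category.comp_id, Category.id_comp]
      exact congrArg (fun k => M.map ((g.1, k) : (p.1, x.mid) ⟶ (q.1, q.2)) x.n)
        (show 𝟙 x.mid ≫ ((𝟙 (op x.mid)).unop ≫ x.m ≫ g.2) = x.m ≫ g.2 by simp)

/-- Right unit collapse `M ⋙ id_B ⟶ M`. -/
def rcol (M : Prof A B) : comp M (idP B) ⟶ M where
  app p := TypeCat.ofHom <|
    Quot.lift
      (fun x => M.map ((x.n.op, 𝟙 p.2) : (op x.mid, p.2) ⟶ (p.1, p.2)) x.m)
      (by
        rintro x y h
        cases h with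
        | @mk b b' f n m =>
          show M.map ((((idP B).map ((𝟙 p.1, f) : (p.1, b) ⟶ (p.1, b')) n).op, 𝟙 p.2) :
              (op b', p.2) ⟶ (p.1, p.2)) m
            = M.map ((n.op, 𝟙 p.2) : (op b, p.2) ⟶ (p.1, p.2))
                (M.map ((f.op, 𝟙 p.2) : (op b', p.2) ⟶ (op b, p.2)) m)
          rw [mapmap]
          dsimp only [idP_map]
          simp [op_comp] <;> rfl)
  naturality p q g := by
    ext x
    induction x using Quot.ind with
    | _ x =>
      show M.map ((((idP B).map ((g.1, 𝟙 x.mid) : (p.1, x.mid) ⟶ (q.1, x.mid)) x.n).op, 𝟙 q.2) :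
            (op x.mid, q.2) ⟶ (q.1, q.2))
          (M.map ((𝟙 (op x.mid), g.2) : (op x.mid, p.2) ⟶ (op x.mid, q.2)) x.m)
        = M.map g (M.map ((x.n.op, 𝟙 p.2) : (op x.mid, p.2) ⟶ (p.1, p.2)) x.m)
      rw [mapmap, mapmap]
      dsimp only [idP_map]
      simp [op_comp] <;> rfl

/-- Associator (forward direction) for profunctor composition. -/
def assocHom (M : Prof A B) (N : Prof B C) (O : Prof C D) :
    comp (comp M N) O ⟶ comp M (comp N O) where
  app p := TypeCat.ofHom <|
    Quot.lift
      (fun (x : Pt (comp M N) O p) =>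
        Quot.lift
          (fun (y : Pt M N (op x.mid, p.2)) => Quot.mk (CRel M (comp N O) p)
            ⟨y.mid, (Quot.mk (CRel N O (p.1, y.mid)) ⟨x.mid, x.n, y.n⟩ :
              (comp N O).obj (p.1, y.mid)), y.m⟩)
          (by
            rintro y y' h
            cases h with
            | @mk b b' f n' m' =>
              have h := Quot.sound (CRel.mk (M := M) (N := comp N O) (p := p) f
                (Quot.mk (CRel N O (p.1, b)) ⟨x.mid, x.n, n'⟩ :
                  (comp N O).obj (p.1, b)) m')
              refine Eq.trans ?_ h
              show _ = Quot.mk (CRel M (comp N O) p) ⟨b', (Quot.mk (CRel N O (p.1, b'))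
                ⟨x.mid, O.map ((𝟙 p.1, 𝟙 x.mid) : (p.1, x.mid) ⟶ (p.1, x.mid)) x.n, _⟩ :
                (comp N O).obj (p.1, b')), m'⟩
              rw [mapid])
          x.m)
      (by
        rintro x x' h
        cases h with
        | @mk c c' f n m =>
          dsimp only
          induction m using Quot.ind with
          | _ y =>
            refine Eq.trans ?_ (congrArg (fun w => Quot.mk (CRel M (comp N O) p)
              (⟨y.mid, _, w⟩ : Pt M (comp N O) p)) (mapid M y.m).symm)
            exact congrArg (fun z => Quot.mk (CRel M (comp N O) p) ⟨y.mid, z, y.m⟩)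
              (Quot.sound (CRel.mk (M := N) (N := O) (p := (p.1, y.mid)) f n y.n)))
  naturality p q g := by
    ext x
    induction x using Quot.ind with
    | _ x =>
      obtain ⟨c, o, m⟩ := x
      induction m using Quot.ind with
      | _ y => rfl

/-- Associator (inverse direction) for profunctor composition. -/
def assocInv (M : Prof A B) (N : Prof B C) (O : Prof C D) :
    comp M (comp N O) ⟶ comp (comp M N) O where
  app p := TypeCat.ofHom <|
    Quot.lift
      (fun (x : Pt M (comp N O) p) =>
        Quot.lift
          (fun (y : Pt N O (p.1, x.mid)) => Quot.mk (CRel (comp M N) O p)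
            ⟨y.mid, y.n, (Quot.mk (CRel M N (op y.mid, p.2)) ⟨x.mid, y.m, x.m⟩ :
              (comp M N).obj (op y.mid, p.2))⟩)
          (by
            rintro y y' h
            cases h with
            | @mk c c' f n' m' =>
              have h := Quot.sound (CRel.mk (M := comp M N) (N := O) (p := p) f n'
                (Quot.mk (CRel M N (op c', p.2)) ⟨x.mid, m', x.m⟩ :
                  (comp M N).obj (op c', p.2)))
              refine h.trans ?_
              show Quot.mk (CRel (comp M N) O p) ⟨c, n', (Quot.mk (CRel M N (op c, p.2)) ⟨x.mid, _,
                M.map ((𝟙 (op x.mid), 𝟙 p.2) : (op x.mid, p.2) ⟶ (op x.mid, p.2)) x.m⟩ :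
                (comp M N).obj (op c, p.2))⟩ = _
              rw [mapid])
          x.n)
      (by
        rintro x x' h
        cases h with
        | @mk b b' f n m =>
          dsimp only
          induction n using Quot.ind with
          | _ y =>
            show Quot.mk (CRel (comp M N) O p) ⟨y.mid,
              O.map ((𝟙 p.1, 𝟙 y.mid) : (p.1, y.mid) ⟶ (p.1, y.mid)) y.n, _⟩ = _
            rw [mapid]
            exact congrArg
              (fun z => Quot.mk (CRel (comp M N) O p) ⟨y.mid, y.n, z⟩)
              (Quot.sound (CRel.mk (M := M) (N := N) (p := (op y.mid, p.2)) f y.m m)))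
  naturality p q g := by
    ext x
    induction x using Quot.ind with
    | _ x =>
      obtain ⟨b, n, m⟩ := x
      induction n using Quot.ind with
      | _ y => rfl

/-- The covariant representable profunctor `f_*` of a functor, `f_*(b, a) = B(b, f a)`. -/
@[simps]
def lower (f : A ⥤ B) : Prof A B where
  obj p := p.1.unop ⟶ f.obj p.2
  map g := TypeCat.ofHom fun h => g.1.unop ≫ h ≫ f.map g.2
  map_id p := by ext h; simp
  map_comp g h := by ext k; simp

/-- The contravariant representable profunctor `f^*` of a functor, `f^*(a, b) = B(f a, b)`. -/
@[simps]
def upper (f : A ⥤ B) : Prof B A where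
  obj p := f.obj p.1.unop ⟶ p.2
  map g := TypeCat.ofHom fun h => f.map g.1.unop ≫ h ≫ g.2
  map_id p := by ext h; simp
  map_comp g h := by ext k; simp

end Prof

namespace Prof

open Opposite

variable {A B : Type u} [SmallCategory A] [SmallCategory B]

/-- The category of elements of a profunctor `M : Aᵒᵖ × B ⥤ Type` (a two-sided
discrete fibration): objects are triples `(a, b, m)` with `m ∈ M(a, b)`. -/
structure Elts (M : Prof B A) : Type u where
  a : A
  b : B
  m : M.obj (op a, b)

/-- Morphisms in the category of elements: pairs of morphisms compatible with the
element actions. -/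
@[ext]
structure EltsHom {M : Prof B A} (x y : Elts M) : Type u where
  u : x.a ⟶ y.a
  v : x.b ⟶ y.b
  compat : M.map ((u.op, 𝟙 y.b) : (op y.a, y.b) ⟶ (op x.a, y.b)) y.m
    = M.map ((𝟙 (op x.a), v) : (op x.a, x.b) ⟶ (op x.a, y.b)) x.m

@[simps]
def EltsHom.id {M : Prof B A} (x : Elts M) : EltsHom x x :=
  ⟨𝟙 x.a, 𝟙 x.b, by simp⟩

@[simps]
def EltsHom.comp {M : Prof B A} {x y z : Elts M} (φ : EltsHom x y) (ψ : EltsHom y z) :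
    EltsHom x z :=
  ⟨φ.u ≫ ψ.u, φ.v ≫ ψ.v, by
    calc M.map (((φ.u ≫ ψ.u).op, 𝟙 z.b) : (op z.a, z.b) ⟶ (op x.a, z.b)) z.m
        = M.map ((φ.u.op, 𝟙 z.b) : (op y.a, z.b) ⟶ (op x.a, z.b))
            (M.map ((ψ.u.op, 𝟙 z.b) : (op z.a, z.b) ⟶ (op y.a, z.b)) z.m) := by
          rw [mapmap]
          simp [op_comp]
      _ = M.map ((φ.u.op, 𝟙 z.b) : (op y.a, z.b) ⟶ (op x.a, z.b))
            (M.map ((𝟙 (op y.a), ψ.v) : (op y.a, y.b) ⟶ (op y.a, z.b)) y.m) := by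
          rw [ψ.compat]
      _ = M.map ((𝟙 (op x.a), ψ.v) : (op x.a, y.b) ⟶ (op x.a, z.b))
            (M.map ((φ.u.op, 𝟙 y.b) : (op y.a, y.b) ⟶ (op x.a, y.b)) y.m) := by
          rw [mapmap, mapmap]
          simp
      _ = M.map ((𝟙 (op x.a), ψ.v) : (op x.a, y.b) ⟶ (op x.a, z.b))
            (M.map ((𝟙 (op x.a), φ.v) : (op x.a, x.b) ⟶ (op x.a, y.b)) x.m) := by
          rw [φ.compat]
      _ = M.map ((𝟙 (op x.a), φ.v ≫ ψ.v) : (op x.a, x.b) ⟶ (op x.a, z.b)) x.m := by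
          rw [mapmap]
          simp⟩

instance eltsCategory (M : Prof B A) : Category (Elts M) where
  Hom := EltsHom
  id := EltsHom.id
  comp := EltsHom.comp

/-- The projection to `B`. -/
@[simps]
def eltsToB (M : Prof B A) : Elts M ⥤ B where
  obj x := x.b
  map φ := φ.v

/-- The projection to `A`. -/
@[simps]
def eltsToA (M : Prof B A) : Elts M ⥤ A where
  obj x := x.a
  map φ := φ.u

section Factorization

variable {M : Prof B A}

theorem EltsHom.map_comp_u_eq_map_v_comp {x y : Elts M} (f : x ⟶ y) {a : A} {b : B}
    (n : a ⟶ x.a) (m : y.b ⟶ b) :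
    M.map (((n ≫ f.u).op, m) : (op y.a, y.b) ⟶ (op a, b)) y.m
      = M.map ((n.op, f.v ≫ m) : (op x.a, x.b) ⟶ (op a, b)) x.m := by
  calc M.map (((n ≫ f.u).op, m) : (op y.a, y.b) ⟶ (op a, b)) y.m
      = M.map ((n.op, m) : (op x.a, y.b) ⟶ (op a, b))
          (M.map ((f.u.op, 𝟙 y.b) : (op y.a, y.b) ⟶ (op x.a, y.b)) y.m) := by
        rw [mapmap]; simp
    _ = M.map ((n.op, m) : (op x.a, y.b) ⟶ (op a, b))
          (M.map ((𝟙 (op x.a), f.v) : (op x.a, x.b) ⟶ (op x.a, y.b)) x.m) := by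
        rw [f.compat]
    _ = M.map ((n.op, f.v ≫ m) : (op x.a, x.b) ⟶ (op a, b)) x.m := by
        rw [mapmap]; simp

namespace Elts

def restrict (e : Elts M) {a : A} (u : a ⟶ e.a) : Elts M :=
  ⟨a, e.b, M.map ((u.op, 𝟙 e.b) : (op e.a, e.b) ⟶ (op a, e.b)) e.m⟩

def restrictHom (e : Elts M) {a : A} (u : a ⟶ e.a) : e.restrict u ⟶ e :=
  ⟨u, 𝟙 e.b, (mapid M _).symm⟩

def extend (e : Elts M) {b : B} (v : e.b ⟶ b) : Elts M :=
  ⟨e.a, b, M.map ((𝟙 (op e.a), v) : (op e.a, e.b) ⟶ (op e.a, b)) e.m⟩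

def extendHom (e : Elts M) {b : B} (v : e.b ⟶ b) : e ⟶ e.extend v :=
  ⟨𝟙 e.a, v, mapid M (M.map ((𝟙 (op e.a), v) : (op e.a, e.b) ⟶ (op e.a, b)) e.m)⟩

end Elts

variable (M) in
abbrev eltsFactorization : Prof B A :=
  comp (upper (eltsToB M)) (lower (eltsToA M))

def eltsClass {a : A} {b : B} (e : Elts M) (n : a ⟶ e.a) (m : e.b ⟶ b) :
    (eltsFactorization M).obj (op a, b) :=
  Quot.mk _ ⟨e, n, m⟩

theorem eltsClass_eq_of_hom {x y : Elts M} (f : x ⟶ y) {a : A} {b : B} {n : a ⟶ x.a}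
    {n' : a ⟶ y.a} {m : y.b ⟶ b} {m' : x.b ⟶ b} (hn : n ≫ f.u = n') (hm : f.v ≫ m = m') :
    eltsClass y n' m = eltsClass x n m' := by
  have h := Quot.sound (CRel.mk (M := upper (eltsToB M)) (N := lower (eltsToA M))
    (p := (op a, b)) f n m)
  have hn' : (lower (eltsToA M)).map ((𝟙 (op a), f) : (op a, x) ⟶ (op a, y)) n = n' :=
    (Category.id_comp _).trans hn
  have hm' : (upper (eltsToB M)).map ((f.op, 𝟙 b) : (op y, b) ⟶ (op x, b)) m = m' :=
    (congrArg (f.v ≫ ·) (Category.comp_id m)).trans hm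
  rwa [hn', hm'] at h

theorem eltsClass_eq_eltsClass_id (e : Elts M) {a : A} {b : B} (n : a ⟶ e.a) (m : e.b ⟶ b) :
    eltsClass e n m
      = eltsClass ⟨a, b, M.map ((n.op, m) : (op e.a, e.b) ⟶ (op a, b)) e.m⟩ (𝟙 a) (𝟙 b) := by
  calc eltsClass e n m = eltsClass (e.restrict n) (𝟙 a) m :=
        eltsClass_eq_of_hom (e.restrictHom n) (Category.id_comp _) (Category.id_comp _)
    _ = eltsClass ((e.restrict n).extend m) (𝟙 a) (𝟙 b) :=
        (eltsClass_eq_of_hom ((e.restrict n).extendHom m) (Category.comp_id _)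
          (Category.comp_id _)).symm
    _ = _ := congrArg (fun z => eltsClass (⟨a, b, z⟩ : Elts M) (𝟙 a) (𝟙 b)) (by
        change M.map ((𝟙 (op a), m) : (op a, e.b) ⟶ (op a, b))
          (M.map ((n.op, 𝟙 e.b) : (op e.a, e.b) ⟶ (op a, e.b)) e.m) = _
        rw [mapmap]; simp)

variable (M) in
def eltsEval : eltsFactorization M ⟶ M where
  app p := TypeCat.ofHom <|
    Quot.lift (fun x => M.map ((x.n.op, x.m) : (op x.mid.a, x.mid.b) ⟶ p) x.mid.m)
      (by
        rintro _ _ @⟨x, y, f, (n : p.1.unop ⟶ x.a), (m : y.b ⟶ p.2)⟩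
        change M.map (((𝟙 p.1.unop ≫ n ≫ f.u).op, m) : (op y.a, y.b) ⟶ p) y.m
          = M.map ((n.op, f.v ≫ m ≫ 𝟙 p.2) : (op x.a, x.b) ⟶ p) x.m
        rw [Category.id_comp, Category.comp_id]
        exact f.map_comp_u_eq_map_v_comp n m)
  naturality p q g := by
    ext x
    induction x using Quot.ind with | mk x => ?_
    obtain ⟨e, (n : p.1.unop ⟶ e.a), (m : e.b ⟶ p.2)⟩ := x
    change M.map (((g.1.unop ≫ n ≫ 𝟙 e.a).op, 𝟙 e.b ≫ m ≫ g.2) : (op e.a, e.b) ⟶ q) e.m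
      = M.map g (M.map ((n.op, m) : (op e.a, e.b) ⟶ p) e.m)
    rw [mapmap]
    simp

theorem eltsEval_app_bijective (p : Aᵒᵖ × B) : Function.Bijective ((eltsEval M).app p) := by
  refine Function.bijective_iff_has_inverse.mpr
    ⟨fun z => eltsClass ⟨p.1.unop, p.2, z⟩ (𝟙 _) (𝟙 _), ?_, fun z => mapid M z⟩
  rintro ⟨e, n, m⟩
  exact (eltsClass_eq_eltsClass_id e n m).symm

end Factorization

/-- Every profunctor `M : Aᵒᵖ × B ⥤ Type` factors through its category of elements:
with `p : E(M) ⥤ B` and `q : E(M) ⥤ A` the projections, there is an isomorphism of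
profunctors `M ≅ q_* ∘ p^*` (profunctor composition by coends). -/
theorem profunctor_factors_through_elements (M : Prof B A) :
    Nonempty (M ≅ comp (upper (eltsToB M)) (lower (eltsToA M))) := by
  have : ∀ p, IsIso ((eltsEval M).app p) := fun p =>
    (isIso_iff_bijective _).mpr (eltsEval_app_bijective p)
  have : IsIso (eltsEval M) := NatIso.isIso_of_isIso_app _
  exact ⟨(asIso (eltsEval M)).symm⟩

end Prof
end
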